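/- arXiv:0807.1523 — 5 statements merged into one kernel-verified Lean document; each statement's English description precedes it below -/
import Mathlib

section
/- Assume ρ > 0 and ω ∈ ℂ with |ω| = 1, let V ∈ ℂ^d satisfy QV = ρωV, and assume hypothesis (rsr). Then there exists exactly one continuous function Φ : [0,1] → ℂ^d satisfying the basic dilation equation. -/
open scoped Classical BigOperators
open Filter Asymptotics

attribute [local instance] Matrix.linftyOpNormedAddCommGroup Matrix.linftyOpNormedRing

noncomputable section

/-- `A_w = A_{w_1} ⋯ A_{w_K}` for a word `w` of length `K` over the digit alphabet. -/
def wordProd {B d : ℕ} (A : Fin B → Matrix (Fin d) (Fin d) ℂ) {K : ℕ}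
    (w : Fin K → Fin B) : Matrix (Fin d) (Fin d) ℂ :=
  ((List.ofFn w).map A).prod

/-- `(0.w)_B = Σ_{k=1}^K w_k B^{-k}`. -/
def wordVal {B K : ℕ} (w : Fin K → Fin B) : ℝ :=
  ∑ k : Fin K, (w k : ℝ) / (B : ℝ) ^ ((k : ℕ) + 1)

/-- The running sum `S_K(x) = Σ_{|w|=K, (0.w)_B ≤ x} A_w C`. -/
def runSum {B d : ℕ} (A : Fin B → Matrix (Fin d) (Fin d) ℂ) (C : Fin d → ℂ)
    (K : ℕ) (x : ℝ) : Fin d → ℂ :=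
  ∑ w : Fin K → Fin B, if wordVal w ≤ x then (wordProd A w).mulVec C else 0

/-- The basic dilation equation for data `ρ, ω, V`. -/
def DilationEq {B d : ℕ} (A : Fin B → Matrix (Fin d) (Fin d) ℂ) (ρ : ℝ) (ω : ℂ)
    (V : Fin d → ℂ) (Φ : ℝ → Fin d → ℂ) : Prop :=
  Φ 0 = 0 ∧ Φ 1 = V ∧
    ∀ r : Fin B, ∀ x : ℝ, (r : ℝ) / B ≤ x → x < ((r : ℝ) + 1) / B →
      Φ x = ((ρ : ℂ) * ω)⁻¹ •
        ((∑ s ∈ Finset.univ.filter fun s : Fin B => s < r, (A s).mulVec V) +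
          (A r).mulVec (Φ (B * x - r)))

/-!
The continuous solutions are the fixed points of the dilation operator
`(T f)(x) = (ρ ω)⁻¹ Σ_s A_s f(clamp(B x - s))` on the closed affine subspace
`{f ∈ C([0,1], ℂ^d) | f 0 = 0, f 1 = V}`, which `T` preserves because `Q V = ρ ω V`.
The difference of two such functions vanishes at `0` and `1`, so at each point only one digit
contributes to `T f - T g`: `T` is a contraction with constant `λ / ρ < 1`, and Banach's fixed point
theorem gives existence and uniqueness.
-/

open Set unitInterval Matrix

theorem sum_apply_sub_eq_of_le_of_le {M : Type*} [AddCommMonoid M] {B : ℕ} (φ : Fin B → ℝ → M)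
    (hφ0 : ∀ s t, t ≤ 0 → φ s t = 0) (hφ1 : ∀ s t, 1 ≤ t → φ s t = φ s 1)
    {r : Fin B} {y : ℝ} (hry : (r : ℝ) ≤ y) (hyr : y ≤ r + 1) :
    ∑ s, φ s (y - s) = ∑ s with s < r, φ s 1 + φ r (y - r) := by
  have hterm : ∀ s, φ s (y - s) =
      (if s < r then φ s 1 else 0) + (if s = r then φ r (y - r) else 0) := by
    intro s
    rcases lt_trichotomy s r with h | rfl | h
    · have : (s : ℝ) + 1 ≤ r := by exact_mod_cast h
      simp [h, h.ne, hφ1 s _ (by linarith : 1 ≤ y - s)]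
    · simp
    · have : (r : ℝ) + 1 ≤ s := by exact_mod_cast h
      simp [h.not_gt, h.ne', hφ0 s _ (by linarith : y - s ≤ 0)]
  rw [Finset.sum_congr rfl fun s _ => hterm s, Finset.sum_add_distrib, Finset.sum_ite_eq',
    if_pos (Finset.mem_univ r), Finset.sum_filter]

theorem exists_digit_of_mem_Ico {B : ℕ} (hB : 0 < B) {x : ℝ} (hx : x ∈ Ico (0 : ℝ) 1) :
    ∃ r : Fin B, (r : ℝ) ≤ B * x ∧ B * x < r + 1 := by
  have hBx : 0 ≤ (B : ℝ) * x := mul_nonneg (Nat.cast_nonneg B) hx.1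
  have hlt : ⌊(B : ℝ) * x⌋₊ < B :=
    (Nat.floor_lt hBx).2 (mul_lt_of_lt_one_right (by positivity) hx.2)
  exact ⟨⟨_, hlt⟩, Nat.floor_le hBx, Nat.lt_floor_add_one _⟩

theorem exists_digit_of_mem_Icc {B : ℕ} (hB : 0 < B) {x : ℝ} (hx : x ∈ Icc (0 : ℝ) 1) :
    ∃ r : Fin B, (r : ℝ) ≤ B * x ∧ B * x ≤ r + 1 := by
  rcases hx.2.lt_or_eq with hx1 | rfl
  · obtain ⟨r, hr, hr'⟩ := exists_digit_of_mem_Ico hB ⟨hx.1, hx1⟩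
    exact ⟨r, hr, hr'.le⟩
  · refine ⟨⟨B - 1, Nat.sub_lt hB one_pos⟩, ?_, ?_⟩ <;> simp [Nat.cast_pred hB]

section DilationOperator

variable {𝕜 : Type*} [NormedField 𝕜] {B d : ℕ}

/-- `IccExtend` clamps `B x - s` to `[0, 1]`, so for `f 0 = 0`, `f 1 = V` and `x` in the `r`-th
subinterval the digits `s < r` contribute `A s V` and the digits `s > r` nothing: a fixed point is a
solution of the dilation equation with `c = (ρ ω)⁻¹`. -/
def dilationOp (A : Fin B → Matrix (Fin d) (Fin d) 𝕜) (c : 𝕜) (f : C(I, Fin d → 𝕜)) :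
    C(I, Fin d → 𝕜) where
  toFun x := c • ∑ s, A s *ᵥ IccExtend zero_le_one f (B * x - s)
  continuous_toFun := by fun_prop

variable (A : Fin B → Matrix (Fin d) (Fin d) 𝕜) (c : 𝕜)

theorem dilationOp_apply (f : C(I, Fin d → 𝕜)) (x : I) :
    dilationOp A c f x = c • ∑ s, A s *ᵥ IccExtend zero_le_one f (B * x - s) :=
  rfl

theorem dilationOp_apply_zero (f : C(I, Fin d → 𝕜)) :
    dilationOp A c f 0 = c • (∑ s, A s) *ᵥ f 0 := by
  simp only [dilationOp_apply, sum_mulVec, Icc.coe_zero, mul_zero, zero_sub]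
  congr 1
  refine Finset.sum_congr rfl fun s _ => ?_
  rw [IccExtend_of_le_left _ _ (by simp)]
  rfl

theorem dilationOp_apply_one (f : C(I, Fin d → 𝕜)) :
    dilationOp A c f 1 = c • (∑ s, A s) *ᵥ f 1 := by
  simp only [dilationOp_apply, sum_mulVec, Icc.coe_one, mul_one]
  congr 1
  refine Finset.sum_congr rfl fun s _ => ?_
  have : (s : ℝ) + 1 ≤ B := by exact_mod_cast s.isLt
  rw [IccExtend_of_right_le _ _ (by linarith)]
  rfl

theorem dilationOp_apply_of_le_of_le {f : C(I, Fin d → 𝕜)} {V : Fin d → 𝕜} (hf0 : f 0 = 0)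
    (hf1 : f 1 = V) {x : I} {r : Fin B} (hrx : (r : ℝ) ≤ B * x) (hxr : (B : ℝ) * x ≤ r + 1) :
    dilationOp A c f x =
      c • (∑ s with s < r, A s *ᵥ V + A r *ᵥ IccExtend zero_le_one f (B * x - r)) := by
  have h0 : ∀ t ≤ 0, IccExtend zero_le_one f t = 0 :=
    fun t ht => (IccExtend_of_le_left _ _ ht).trans hf0
  have h1 : ∀ t, 1 ≤ t → IccExtend zero_le_one f t = V :=
    fun t ht => (IccExtend_of_right_le _ _ ht).trans hf1
  rw [dilationOp_apply, sum_apply_sub_eq_of_le_of_le (fun s t => A s *ᵥ IccExtend zero_le_one f t)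
    (fun s t ht => by rw [h0 t ht, mulVec_zero]) (fun s t ht => by rw [h1 t ht, h1 1 le_rfl])
    hrx hxr, h1 1 le_rfl]

theorem dilationOp_sub (f g : C(I, Fin d → 𝕜)) :
    dilationOp A c (f - g) = dilationOp A c f - dilationOp A c g := by
  ext x : 1
  simp only [dilationOp_apply, ContinuousMap.sub_apply, ← smul_sub, ← Finset.sum_sub_distrib,
    ← mulVec_sub]
  rfl

theorem norm_dilationOp_le (hB : 0 < B) {lam : ℝ} (hA : ∀ r, ‖A r‖ ≤ lam)
    {f : C(I, Fin d → 𝕜)} (hf0 : f 0 = 0) (hf1 : f 1 = 0) :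
    ‖dilationOp A c f‖ ≤ ‖c‖ * lam * ‖f‖ := by
  have hlam : 0 ≤ lam := (norm_nonneg _).trans (hA ⟨0, hB⟩)
  refine (ContinuousMap.norm_le _ (by positivity)).2 fun x => ?_
  obtain ⟨r, hrx, hxr⟩ := exists_digit_of_mem_Icc hB x.2
  rw [dilationOp_apply_of_le_of_le A c hf0 hf1 hrx hxr]
  simp only [mulVec_zero, Finset.sum_const_zero, zero_add, norm_smul, mul_assoc]
  gcongr
  refine (linfty_opNorm_mulVec _ _).trans (mul_le_mul (hA r) ?_ (norm_nonneg _) hlam)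
  exact ContinuousMap.norm_coe_le_norm f _

end DilationOperator

theorem existsUnique_dilationOp_fixedPoint {𝕜 : Type*} [RCLike 𝕜] {B d : ℕ} (hB : 0 < B)
    {A : Fin B → Matrix (Fin d) (Fin d) 𝕜} {c : 𝕜} {lam : ℝ} (hA : ∀ r, ‖A r‖ ≤ lam)
    (hc : ‖c‖ * lam < 1) {V : Fin d → 𝕜} (hV : c • (∑ r, A r) *ᵥ V = V) :
    ∃! f : C(I, Fin d → 𝕜), f 0 = 0 ∧ f 1 = V ∧ dilationOp A c f = f := by
  set S : Set C(I, Fin d → 𝕜) := {f | f 0 = 0 ∧ f 1 = V}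
  have hS : IsComplete S :=
    ((isClosed_eq (continuous_eval_const 0) continuous_const).inter
      (isClosed_eq (continuous_eval_const 1) continuous_const)).isComplete
  have hmaps : MapsTo (dilationOp A c) S S := fun f ⟨hf0, hf1⟩ =>
    ⟨by rw [dilationOp_apply_zero, hf0, mulVec_zero, smul_zero],
     by rw [dilationOp_apply_one, hf1, hV]⟩
  have hK : 0 ≤ ‖c‖ * lam := mul_nonneg (norm_nonneg _) ((norm_nonneg _).trans (hA ⟨0, hB⟩))
  have hcontr : ContractingWith ⟨_, hK⟩ (hmaps.restrict _ S S) := by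
    refine ⟨hc, LipschitzWith.of_dist_le_mul fun f g => ?_⟩
    simp only [Subtype.dist_eq, MapsTo.val_restrict_apply, dist_eq_norm, ← dilationOp_sub]
    refine norm_dilationOp_le A c hB hA ?_ ?_ <;>
      simp [f.2.1, f.2.2, g.2.1, g.2.2]
  have hpath : (⟨fun t => ((t : ℝ) : 𝕜) • V, by fun_prop⟩ : C(I, Fin d → 𝕜)) ∈ S := by
    constructor <;> simp
  obtain ⟨f, hfS, hfix, -⟩ := hcontr.exists_fixedPoint' hS hmaps hpath (edist_ne_top _ _)
  refine ⟨f, ⟨hfS.1, hfS.2, hfix⟩, fun g ⟨hg0, hg1, hgfix⟩ => ?_⟩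
  exact congrArg Subtype.val <| hcontr.fixedPoint_unique' (x := ⟨g, hg0, hg1⟩) (y := ⟨f, hfS⟩)
    (Subtype.ext hgfix) (Subtype.ext hfix)

theorem dilationEq_iff_fixedPoint {B d : ℕ} (hB : 0 < B) {A : Fin B → Matrix (Fin d) (Fin d) ℂ}
    {ρ : ℝ} {ω : ℂ} {V : Fin d → ℂ} (hV : ((ρ : ℂ) * ω)⁻¹ • (∑ r, A r) *ᵥ V = V) {Ψ : ℝ → Fin d → ℂ}
    {f : C(I, Fin d → ℂ)} (hf : ∀ x : I, f x = Ψ x) :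
    DilationEq A ρ ω V Ψ ↔ f 0 = 0 ∧ f 1 = V ∧ dilationOp A ((ρ : ℂ) * ω)⁻¹ f = f := by
  have hB' : (0 : ℝ) < B := Nat.cast_pos.2 hB
  have hstep : f 0 = 0 → f 1 = V → ∀ (x : I) (r : Fin B), (r : ℝ) ≤ B * x → (B : ℝ) * x < r + 1 →
      dilationOp A ((ρ : ℂ) * ω)⁻¹ f x =
        ((ρ : ℂ) * ω)⁻¹ • (∑ s with s < r, A s *ᵥ V + A r *ᵥ Ψ (B * x - r)) := by
    intro hf0 hf1 x r hrx hxr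
    rw [dilationOp_apply_of_le_of_le A _ hf0 hf1 hrx hxr.le,
      IccExtend_of_mem _ _ ⟨by linarith, by linarith⟩, hf]
  constructor
  · rintro ⟨hΨ0, hΨ1, hΨ⟩
    have hf0 : f 0 = 0 := by simpa [hΨ0] using hf 0
    have hf1 : f 1 = V := by simpa [hΨ1] using hf 1
    refine ⟨hf0, hf1, ContinuousMap.ext fun x => ?_⟩
    rcases x.2.2.lt_or_eq with hx1 | hx1
    · obtain ⟨r, hrx, hxr⟩ := exists_digit_of_mem_Ico hB ⟨x.2.1, hx1⟩
      rw [hstep hf0 hf1 x r hrx hxr, hf,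
        hΨ r x ((div_le_iff₀' hB').2 hrx) ((lt_div_iff₀' hB').2 hxr)]
    · obtain rfl : x = 1 := Subtype.ext hx1
      rw [dilationOp_apply_one, hf1, hV]
  · rintro ⟨hf0, hf1, hfix⟩
    refine ⟨by simpa [hf0] using (hf 0).symm, by simpa [hf1] using (hf 1).symm,
      fun r x hrx hxr => ?_⟩
    have hrB : (r : ℝ) + 1 ≤ B := by exact_mod_cast r.isLt
    have hx : x ∈ I := ⟨(div_nonneg r.val.cast_nonneg hB'.le).trans hrx,
      hxr.le.trans ((div_le_one hB').2 hrB)⟩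
    rw [← hf ⟨x, hx⟩, ← hfix,
      hstep hf0 hf1 ⟨x, hx⟩ r ((div_le_iff₀' hB').1 hrx) ((lt_div_iff₀' hB').1 hxr)]

theorem dilationEq_existsUnique_continuous_general (B d : ℕ) (hB : 2 ≤ B)
    (A : Fin B → Matrix (Fin d) (Fin d) ℂ)
    (ρ : ℝ) (hρ : 0 < ρ) (ω : ℂ) (hω : ‖ω‖ = 1)
    (V : Fin d → ℂ) (hV : (∑ r, A r).mulVec V = ((ρ : ℂ) * ω) • V)
    (lam : ℝ) (hlamρ : lam < ρ) (hA : ∀ r, ‖A r‖ ≤ lam) :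
    ∃ Φ : ℝ → Fin d → ℂ,
      (ContinuousOn Φ (Set.Icc 0 1) ∧ DilationEq A ρ ω V Φ) ∧
        ∀ Ψ : ℝ → Fin d → ℂ, ContinuousOn Ψ (Set.Icc 0 1) → DilationEq A ρ ω V Ψ →
          Set.EqOn Ψ Φ (Set.Icc 0 1) := by
  have hB0 : 0 < B := by omega
  have hμ : (ρ : ℂ) * ω ≠ 0 := by
    refine mul_ne_zero (Complex.ofReal_ne_zero.2 hρ.ne') ?_
    rintro rfl
    simp at hω
  have hc : ‖((ρ : ℂ) * ω)⁻¹‖ * lam < 1 := by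
    rwa [norm_inv, norm_mul, hω, mul_one, Complex.norm_real, Real.norm_of_nonneg hρ.le,
      inv_mul_lt_one₀ hρ]
  have hcV : ((ρ : ℂ) * ω)⁻¹ • (∑ r, A r) *ᵥ V = V := by rw [hV, inv_smul_smul₀ hμ]
  obtain ⟨f, hf, hf_unique⟩ := existsUnique_dilationOp_fixedPoint hB0 hA hc hcV
  refine ⟨IccExtend zero_le_one f, ⟨f.continuous.Icc_extend'.continuousOn,
    (dilationEq_iff_fixedPoint hB0 hcV fun x => (IccExtend_val _ _ x).symm).2 hf⟩,
    fun Ψ hΨc hΨ x hx => ?_⟩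
  let g : C(I, Fin d → ℂ) := ⟨(Icc 0 1).domRestrict Ψ, hΨc.domRestrict⟩
  have hgf : g = f := hf_unique g ((dilationEq_iff_fixedPoint hB0 hcV fun _ => rfl).1 hΨ)
  rw [IccExtend_of_mem _ _ hx, ← hgf]
  rfl

/-- under (rsr), the basic dilation equation has exactly one
continuous solution on `[0,1]`. -/
theorem dilationEq_existsUnique_continuous (B d : ℕ) (hB : 2 ≤ B) (hd : 1 ≤ d)
    (A : Fin B → Matrix (Fin d) (Fin d) ℂ)
    (ρ : ℝ) (hρ : 0 < ρ) (ω : ℂ) (hω : ‖ω‖ = 1)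
    (V : Fin d → ℂ) (hV : (∑ r, A r).mulVec V = ((ρ : ℂ) * ω) • V)
    (lam : ℝ) (hlam : 0 < lam) (hlamρ : lam < ρ) (hA : ∀ r, ‖A r‖ ≤ lam) :
    ∃ Φ : ℝ → Fin d → ℂ,
      (ContinuousOn Φ (Set.Icc 0 1) ∧ DilationEq A ρ ω V Φ) ∧
        ∀ Ψ : ℝ → Fin d → ℂ, ContinuousOn Ψ (Set.Icc 0 1) → DilationEq A ρ ω V Ψ →
          Set.EqOn Ψ Φ (Set.Icc 0 1) :=
  dilationEq_existsUnique_continuous_general B d hB A ρ hρ ω hω V hV lam hlamρ hA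
end
end

section
/- Let ρ > 0 and ω ∈ ℂ with |ω| = 1 and V ∈ ℂ^d. Then the basic dilation equation has at most one solution Φ : [0,1] → ℂ^d that is right-continuous at every point of [0,1); i.e., if Φ₁ and Φ₂ are two right-continuous solutions then Φ₁ = Φ₂. No norm bound on the matrices A_r is needed. -/
open scoped Classical BigOperators
open Filter Asymptotics

attribute [local instance] Matrix.linftyOpNormedAddCommGroup Matrix.linftyOpNormedRing

noncomputable section

/-- the basic dilation equation has at most one right-continuous
solution; no norm bound on the matrices is needed. -/
theorem dilationEq_unique_of_rightContinuous (B d : ℕ) (hB : 2 ≤ B) (hd : 1 ≤ d)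
    (A : Fin B → Matrix (Fin d) (Fin d) ℂ)
    (ρ : ℝ) (hρ : 0 < ρ) (ω : ℂ) (hω : ‖ω‖ = 1) (V : Fin d → ℂ)
    (Φ₁ Φ₂ : ℝ → Fin d → ℂ)
    (h₁ : DilationEq A ρ ω V Φ₁) (h₂ : DilationEq A ρ ω V Φ₂)
    (hrc₁ : ∀ x ∈ Set.Ico (0:ℝ) 1, ContinuousWithinAt Φ₁ (Set.Icc x 1) x)
    (hrc₂ : ∀ x ∈ Set.Ico (0:ℝ) 1, ContinuousWithinAt Φ₂ (Set.Icc x 1) x) :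
    Set.EqOn Φ₁ Φ₂ (Set.Icc 0 1) := by
  obtain ⟨h10, h11, h1e⟩ := h₁
  obtain ⟨h20, h21, h2e⟩ := h₂
  set D : ℝ → Fin d → ℂ := fun x => Φ₁ x - Φ₂ x with hD
  have hBR : (1:ℝ) < B := by exact_mod_cast lt_of_lt_of_le one_lt_two hB
  have hB0 : (0:ℝ) < B := by linarith
  have key : ∀ r : Fin B, ∀ x : ℝ, (r:ℝ)/B ≤ x → x < ((r:ℝ)+1)/B →
      D x = ((ρ:ℂ)*ω)⁻¹ • (A r).mulVec (D (B*x - r)) := by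
    intro r x hx1 hx2
    simp only [hD]
    rw [h1e r x hx1 hx2, h2e r x hx1 hx2, ← smul_sub, add_sub_add_left_eq_sub,
      ← Matrix.mulVec_sub]
  have vanish : ∀ n k : ℕ, k < B^n → D ((k:ℝ)/(B:ℝ)^n) = 0 := by
    intro n
    induction n with
    | zero =>
      intro k hk
      simp only [pow_zero] at hk
      have hk0 : k = 0 := by omega
      subst hk0
      simp [hD, h10, h20]
    | succ n ih =>
      intro k hk
      have hpn : 0 < B^n := pow_pos (by omega) n
      have hpnR : (0:ℝ) < (B:ℝ)^n := pow_pos hB0 n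
      have hrB : k / B^n < B := by
        rw [Nat.div_lt_iff_lt_mul hpn, mul_comm]
        rw [pow_succ] at hk
        exact hk
      set r : Fin B := ⟨k / B^n, hrB⟩ with hr
      have hdm : B^n * (k / B^n) + k % B^n = k := Nat.div_add_mod k (B^n)
      have hcast : (k:ℝ) = (B:ℝ)^n * (r:ℝ) + ((k % B^n : ℕ):ℝ) := by
        have h' : ((B^n * (k / B^n) + k % B^n : ℕ):ℝ) = (k:ℝ) := by exact_mod_cast hdm
        rw [← h']
        have hrval : ((r : Fin B) : ℝ) = ((k / B^n : ℕ) : ℝ) := by simp [hr]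
        rw [hrval]
        push_cast
        ring
      have hx1 : (r:ℝ)/B ≤ (k:ℝ)/(B:ℝ)^(n+1) := by
        rw [div_le_div_iff₀ hB0 (pow_pos hB0 (n+1))]
        rw [hcast, pow_succ]
        have : (0:ℝ) ≤ ((k % B^n : ℕ):ℝ) := Nat.cast_nonneg _
        nlinarith
      have hx2 : (k:ℝ)/(B:ℝ)^(n+1) < ((r:ℝ)+1)/B := by
        rw [div_lt_div_iff₀ (pow_pos hB0 (n+1)) hB0]
        rw [hcast, pow_succ]
        have hmod : ((k % B^n : ℕ):ℝ) < (B:ℝ)^n := by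
          exact_mod_cast Nat.mod_lt k hpn
        nlinarith
      have harg : (B:ℝ) * ((k:ℝ)/(B:ℝ)^(n+1)) - (r:ℝ) = ((k % B^n : ℕ):ℝ)/(B:ℝ)^n := by
        rw [hcast, pow_succ]
        field_simp
        ring
      rw [key r _ hx1 hx2, harg, ih _ (Nat.mod_lt k hpn)]
      simp
  have hx0 : ∀ x ∈ Set.Ico (0:ℝ) 1, D x = 0 := by
    intro x hx
    obtain ⟨hx0', hx1'⟩ := hx
    set S : Set ℝ := {y | (∃ n k : ℕ, k < B^n ∧ y = (k:ℝ)/(B:ℝ)^n) ∧ x < y ∧ y < 1}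
      with hS
    have hSsub : S ⊆ Set.Icc x 1 := fun y hy => ⟨le_of_lt hy.2.1, le_of_lt hy.2.2⟩
    have hclos : x ∈ closure S := by
      rw [Metric.mem_closure_iff]
      intro ε hε
      obtain ⟨n, hn⟩ := pow_unbounded_of_one_lt (max (1/ε) (1/(1-x))) hBR
      have hpnR : (0:ℝ) < (B:ℝ)^n := pow_pos hB0 n
      have h1x : (0:ℝ) < 1 - x := by linarith
      have hn1 : 1/ε < (B:ℝ)^n := lt_of_le_of_lt (le_max_left _ _) hn
      have hn2 : 1/(1-x) < (B:ℝ)^n := lt_of_le_of_lt (le_max_right _ _) hn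
      have hεn : 1/(B:ℝ)^n < ε := by
        rw [div_lt_iff₀ hpnR]
        rw [div_lt_iff₀ hε] at hn1
        linarith
      have hxn : 1/(B:ℝ)^n < 1 - x := by
        rw [div_lt_iff₀ hpnR]
        rw [div_lt_iff₀ h1x] at hn2
        linarith
      set k : ℕ := (⌊x * (B:ℝ)^n⌋).toNat + 1 with hk
      have hfl0 : (0:ℤ) ≤ ⌊x * (B:ℝ)^n⌋ := Int.floor_nonneg.mpr (mul_nonneg hx0' hpnR.le)
      have hkZ : (k:ℤ) = ⌊x * (B:ℝ)^n⌋ + 1 := by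
        rw [hk]
        push_cast
        rw [Int.toNat_of_nonneg hfl0]
      have hkR : (k:ℝ) = (⌊x * (B:ℝ)^n⌋ : ℝ) + 1 := by exact_mod_cast hkZ
      have hfl1 : (⌊x * (B:ℝ)^n⌋ : ℝ) ≤ x * (B:ℝ)^n := Int.floor_le _
      have hfl2 : x * (B:ℝ)^n < (⌊x * (B:ℝ)^n⌋ : ℝ) + 1 := Int.lt_floor_add_one _
      set y : ℝ := (k:ℝ)/(B:ℝ)^n with hy
      have hxy : x < y := by
        rw [hy, lt_div_iff₀ hpnR, hkR]
        linarith
      have hyb : y ≤ x + 1/(B:ℝ)^n := by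
        rw [hy, div_le_iff₀ hpnR, hkR, add_mul, div_mul_cancel₀ _ (ne_of_gt hpnR)]
        linarith
      have hy1 : y < 1 := by linarith
      have hkn : k < B^n := by
        have h1lt : 1 < (1-x) * (B:ℝ)^n := by
          have := (div_lt_iff₀ hpnR).mp hxn
          linarith
        have hklt : (k:ℝ) < (B:ℝ)^n := by
          rw [hkR]
          nlinarith
        exact_mod_cast hklt
      refine ⟨y, ⟨⟨n, k, hkn, rfl⟩, hxy, hy1⟩, ?_⟩
      rw [Real.dist_eq, abs_of_nonpos (by linarith)]
      linarith
    have hcd : ContinuousWithinAt D (Set.Icc x 1) x :=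
      (hrc₁ x ⟨hx0', hx1'⟩).sub (hrc₂ x ⟨hx0', hx1'⟩)
    have hcdS : ContinuousWithinAt D S x := hcd.mono hSsub
    haveI hne : (nhdsWithin x S).NeBot := mem_closure_iff_nhdsWithin_neBot.mp hclos
    have hzero : Tendsto D (nhdsWithin x S) (nhds 0) := by
      have hev : ∀ᶠ y in nhdsWithin x S, D y = 0 := by
        filter_upwards [self_mem_nhdsWithin] with y hy
        obtain ⟨⟨n, k, hk, rfl⟩, _, _⟩ := hy
        exact vanish n k hk
      exact Tendsto.congr' (by filter_upwards [hev] with y hy using hy.symm)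
        tendsto_const_nhds
    exact tendsto_nhds_unique hcdS hzero
  intro x hx
  rcases eq_or_lt_of_le hx.2 with h | h
  · rw [h, h11, h21]
  · have := hx0 x ⟨hx.1, h⟩
    have : Φ₁ x - Φ₂ x = 0 := this
    exact sub_eq_zero.mp this
end
end

section
/- Assume QC = ρωC with ρ > 0, |ω| = 1 (so C is an eigenvector of Q), and hypothesis (rsr). Then sup_{x∈[0,1]} ‖(ρω)^{−K} S_K(x) − F(x)‖ = O((λ/ρ)^K) as K → ∞, where F is the unique continuous solution of the basic dilation equation with V = C. -/
open scoped Classical BigOperators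
open Filter Asymptotics

attribute [local instance] Matrix.linftyOpNormedAddCommGroup Matrix.linftyOpNormedRing

noncomputable section

/-!
Write `μ = ρω` and `G_K = μ⁻ᴷ S_K`. Splitting off the first digit of a word gives
`S_{K+1}(x) = Σ_{s<r} A_s S_K(1) + A_r S_K(Bx - r)` on `[r/B, (r+1)/B)`, and `S_K(1) = Qᴷ C = μᴷ C`;
so `G_K(1) = C` and `G_{K+1}` is the image of `G_K` under the dilation operator `T` of the
equation. By (rsr), `T` contracts the sup distance on `[0, 1]` by `λ/ρ` between functions that
agree at `1`. Hence `G_K` converges uniformly at rate `(λ/ρ)ᴷ` to a fixed point `F` of `T`, the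
only bounded one. `F` is continuous because distinct words of length `K` are `B⁻ᴷ`-separated, so
`S_K` changes by at most `λᴷ ‖C‖` over any window of width `B⁻ᴷ`.
-/

open Set Topology
open scoped Matrix

variable {B d : ℕ}

section Words

lemma wordVal_nonneg {K : ℕ} (w : Fin K → Fin B) : 0 ≤ wordVal w :=
  Finset.sum_nonneg fun _ _ => by positivity

lemma wordVal_cons {K : ℕ} (s : Fin B) (w : Fin K → Fin B) :
    wordVal (Fin.cons s w : Fin (K + 1) → Fin B) = ((s : ℝ) + wordVal w) / B := by
  simp only [wordVal, Fin.sum_univ_succ, Fin.cons_zero, Fin.cons_succ, Fin.val_succ,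
    Fin.val_zero, zero_add, pow_one, add_div, Finset.sum_div, div_div, ← pow_succ]

lemma wordVal_lt_one (hB : 0 < B) {K : ℕ} (w : Fin K → Fin B) : wordVal w < 1 := by
  induction K with
  | zero => simp [wordVal]
  | succ K ih =>
    rw [← Fin.cons_self_tail w, wordVal_cons, div_lt_one (by positivity)]
    have hdigit : ((w 0 : ℕ) : ℝ) + 1 ≤ B := by exact_mod_cast (w 0).isLt
    linarith [ih (Fin.tail w)]

lemma wordVal_mul_pow (hB : 0 < B) {K : ℕ} (w : Fin K → Fin B) :
    wordVal w * (B : ℝ) ^ K = (finFunctionFinEquiv (w ∘ Fin.rev) : ℕ) := by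
  rw [finFunctionFinEquiv_apply]
  push_cast
  rw [wordVal, Finset.sum_mul]
  refine Fintype.sum_equiv Fin.revPerm _ _ fun k => ?_
  rw [Fin.revPerm_apply, Function.comp_apply, Fin.rev_rev, Fin.val_rev,
    div_mul_eq_mul_div, div_eq_iff (by positivity), mul_assoc, ← pow_add]
  congr 2
  omega

lemma eq_of_abs_wordVal_sub_lt (hB : 0 < B) {K : ℕ} {w w' : Fin K → Fin B}
    (h : |wordVal w - wordVal w'| < ((B : ℝ) ^ K)⁻¹) : w = w' := by
  have hBK : (0 : ℝ) < (B : ℝ) ^ K := by positivity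
  have hinj : Function.Injective fun w : Fin K → Fin B => (finFunctionFinEquiv (w ∘ Fin.rev) : ℕ) :=
    (Fin.val_injective.comp finFunctionFinEquiv.injective).comp
      Fin.rev_surjective.injective_comp_right
  have hle : ∀ {m n : ℕ}, (m : ℝ) - n < 1 → m ≤ n := fun h =>
    Nat.lt_add_one_iff.mp (by exact_mod_cast sub_lt_iff_lt_add'.mp h)
  have h' : |wordVal w * (B : ℝ) ^ K - wordVal w' * (B : ℝ) ^ K| < 1 := by
    rwa [← sub_mul, abs_mul, abs_of_pos hBK, ← lt_mul_inv_iff₀ hBK, one_mul]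
  rw [wordVal_mul_pow hB, wordVal_mul_pow hB, abs_sub_lt_iff] at h'
  exact hinj (le_antisymm (hle h'.1) (hle h'.2))

lemma wordProd_cons {K : ℕ} (A : Fin B → Matrix (Fin d) (Fin d) ℂ) (s : Fin B)
    (w : Fin K → Fin B) : wordProd A (Fin.cons s w : Fin (K + 1) → Fin B) = A s * wordProd A w := by
  simp [wordProd, List.ofFn_succ]

lemma norm_wordProd_mulVec_le {A : Fin B → Matrix (Fin d) (Fin d) ℂ} {lam : ℝ}
    (hA : ∀ r, ‖A r‖ ≤ lam) (hlam : 0 ≤ lam) (C : Fin d → ℂ) {K : ℕ} (w : Fin K → Fin B) :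
    ‖wordProd A w *ᵥ C‖ ≤ lam ^ K * ‖C‖ := by
  induction K with
  | zero => simp [wordProd]
  | succ K ih =>
    rw [← Fin.cons_self_tail w, wordProd_cons, ← Matrix.mulVec_mulVec, pow_succ', mul_assoc]
    exact (Matrix.linfty_opNorm_mulVec _ _).trans
      (mul_le_mul (hA _) (ih _) (norm_nonneg _) hlam)

lemma Fintype.sum_fun_fin_succ {M : Type*} [AddCommMonoid M] {K : ℕ}
    (f : (Fin (K + 1) → Fin B) → M) :
    ∑ w, f w = ∑ s : Fin B, ∑ w : Fin K → Fin B, f (Fin.cons s w) := by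
  rw [← (Fin.consEquiv fun _ => Fin B).sum_comp f, Fintype.sum_prod_type]
  rfl

end Words

section Digits

lemma sub_mem_Ico_of_mem_digit (hB : 0 < B) {r : Fin B} {x : ℝ} (h₁ : (r : ℝ) / B ≤ x)
    (h₂ : x < ((r : ℝ) + 1) / B) : B * x - r ∈ Ico (0 : ℝ) 1 := by
  have hBR : (0 : ℝ) < B := by positivity
  rw [div_le_iff₀ hBR] at h₁
  rw [lt_div_iff₀ hBR] at h₂
  constructor <;> linarith

lemma exists_mem_digit (hB : 0 < B) {x : ℝ} (hx : x ∈ Ico (0 : ℝ) 1) :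
    ∃ r : Fin B, (r : ℝ) / B ≤ x ∧ x < ((r : ℝ) + 1) / B := by
  have hBR : (0 : ℝ) < B := by positivity
  have hBx : 0 ≤ B * x := mul_nonneg hBR.le hx.1
  have hlt : ⌊B * x⌋₊ < B := (Nat.floor_lt hBx).mpr (by nlinarith [hx.2])
  refine ⟨⟨⌊B * x⌋₊, hlt⟩, ?_, ?_⟩
  · rw [div_le_iff₀ hBR, mul_comm x]
    exact Nat.floor_le hBx
  · rw [lt_div_iff₀ hBR, mul_comm x]
    exact Nat.lt_floor_add_one _

lemma mem_Ico_of_mem_digit {r : Fin B} {x : ℝ} (h₁ : (r : ℝ) / B ≤ x)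
    (h₂ : x < ((r : ℝ) + 1) / B) : x ∈ Ico (0 : ℝ) 1 := by
  have hB : 0 < B := r.pos
  refine ⟨le_trans (by positivity) h₁, h₂.trans_le ?_⟩
  rw [div_le_one (by positivity)]
  exact_mod_cast r.isLt

end Digits

section RunSum

variable (A : Fin B → Matrix (Fin d) (Fin d) ℂ) (C : Fin d → ℂ)

lemma runSum_of_neg (K : ℕ) {x : ℝ} (hx : x < 0) : runSum A C K x = 0 :=
  Finset.sum_eq_zero fun w _ => if_neg (by linarith [wordVal_nonneg w])

lemma runSum_of_one_le (hB : 0 < B) (K : ℕ) {x : ℝ} (hx : 1 ≤ x) :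
    runSum A C K x = ∑ w : Fin K → Fin B, wordProd A w *ᵥ C :=
  Finset.sum_congr rfl fun w _ => if_pos ((wordVal_lt_one hB w).le.trans hx)

lemma sum_wordProd_mulVec_of_eigenvector {μ : ℂ} (hC : (∑ r, A r) *ᵥ C = μ • C) (K : ℕ) :
    ∑ w : Fin K → Fin B, wordProd A w *ᵥ C = μ ^ K • C := by
  induction K with
  | zero => simp [wordProd]
  | succ K ih =>
    rw [Fintype.sum_fun_fin_succ]
    simp only [wordProd_cons, ← Matrix.mulVec_mulVec, ← Matrix.mulVec_sum, ih, Matrix.mulVec_smul]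
    rw [← Finset.smul_sum, ← Matrix.sum_mulVec, hC, smul_smul, pow_succ]

lemma runSum_succ (hB : 0 < B) (K : ℕ) (x : ℝ) :
    runSum A C (K + 1) x = ∑ s : Fin B, A s *ᵥ runSum A C K (B * x - s) := by
  have hBR : (0 : ℝ) < B := by positivity
  simp only [runSum, Fintype.sum_fun_fin_succ, Matrix.mulVec_sum, wordVal_cons, wordProd_cons,
    ← Matrix.mulVec_mulVec, div_le_iff₀ hBR, le_sub_iff_add_le', mul_comm x]
  congr! 2 with s _ w _
  split_ifs <;> simp

lemma runSum_succ_of_mem_digit (hB : 0 < B) (K : ℕ) {r : Fin B} {x : ℝ}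
    (h₁ : (r : ℝ) / B ≤ x) (h₂ : x < ((r : ℝ) + 1) / B) :
    runSum A C (K + 1) x =
      ∑ s ∈ Finset.univ.filter (· < r), A s *ᵥ runSum A C K 1 +
        A r *ᵥ runSum A C K (B * x - r) := by
  obtain ⟨hy₀, hy₁⟩ := sub_mem_Ico_of_mem_digit hB h₁ h₂
  have hsplit : ∀ s : Fin B, A s *ᵥ runSum A C K (B * x - s) =
      (if s < r then A s *ᵥ runSum A C K 1 else 0) +
        if s = r then A r *ᵥ runSum A C K (B * x - r) else 0 := by
    intro s
    rcases lt_trichotomy s r with hs | rfl | hs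
    · have hsr : (s : ℝ) + 1 ≤ r := by exact_mod_cast hs
      rw [if_pos hs, if_neg hs.ne, add_zero, runSum_of_one_le A C hB K le_rfl,
        runSum_of_one_le A C hB K (by linarith)]
    · simp
    · have hrs : (r : ℝ) + 1 ≤ s := by exact_mod_cast hs
      rw [if_neg hs.not_gt, if_neg hs.ne', add_zero, runSum_of_neg A C K (by linarith),
        Matrix.mulVec_zero]
  rw [runSum_succ A C hB, Finset.sum_congr rfl fun s _ => hsplit s, Finset.sum_add_distrib,
    Finset.sum_ite_eq' Finset.univ r, if_pos (Finset.mem_univ r), Finset.sum_filter]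

lemma norm_runSum_le (K : ℕ) (x : ℝ) :
    ‖runSum A C K x‖ ≤ ∑ w : Fin K → Fin B, ‖wordProd A w *ᵥ C‖ :=
  norm_sum_le_of_le _ fun w _ => by split_ifs <;> simp

lemma norm_runSum_sub_le (hB : 0 < B) {lam : ℝ} (hA : ∀ r, ‖A r‖ ≤ lam) (hlam : 0 ≤ lam)
    (K : ℕ) {x y : ℝ} (hxy : |x - y| ≤ ((B : ℝ) ^ K)⁻¹) :
    ‖runSum A C K x - runSum A C K y‖ ≤ lam ^ K * ‖C‖ := by
  wlog hyx : y ≤ x generalizing x y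
  · rw [norm_sub_rev]
    exact this (by rwa [abs_sub_comm]) (le_of_not_ge hyx)
  set S := Finset.univ.filter fun w : Fin K → Fin B => wordVal w ∈ Ioc y x
  have hdiff : runSum A C K x - runSum A C K y = ∑ w ∈ S, wordProd A w *ᵥ C := by
    rw [Finset.sum_filter, runSum, runSum, ← Finset.sum_sub_distrib]
    refine Finset.sum_congr rfl fun w _ => ?_
    by_cases hy : wordVal w ≤ y
    · simp [hy, hy.trans hyx, not_lt.mpr hy]
    · simp [hy, not_le.mp hy]
  have hcard : S.card ≤ 1 := by
    refine Finset.card_le_one.mpr fun a ha b hb => eq_of_abs_wordVal_sub_lt hB ?_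
    simp only [S, Finset.mem_filter, Finset.mem_univ, true_and, mem_Ioc] at ha hb
    rw [abs_sub_lt_iff]
    constructor <;> linarith [(abs_le.mp hxy).2]
  calc ‖runSum A C K x - runSum A C K y‖
      ≤ ∑ _w ∈ S, lam ^ K * ‖C‖ :=
        hdiff ▸ norm_sum_le_of_le _ fun w _ => norm_wordProd_mulVec_le hA hlam C w
    _ = S.card * (lam ^ K * ‖C‖) := by rw [Finset.sum_const, nsmul_eq_mul]
    _ ≤ lam ^ K * ‖C‖ := mul_le_of_le_one_left (by positivity) (by exact_mod_cast hcard)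

end RunSum

/-- `Φ'` is the image of `Φ` under the dilation operator with multiplier `μ`, on `[0, 1)` only:
the value `Φ' 1` is left free. -/
def IsDilationStep (A : Fin B → Matrix (Fin d) (Fin d) ℂ) (μ : ℂ) (V : Fin d → ℂ)
    (Φ Φ' : ℝ → Fin d → ℂ) : Prop :=
  ∀ r : Fin B, ∀ x : ℝ, (r : ℝ) / B ≤ x → x < ((r : ℝ) + 1) / B →
    Φ' x = μ⁻¹ •
      ((∑ s ∈ Finset.univ.filter fun s : Fin B => s < r, (A s).mulVec V) +
        (A r).mulVec (Φ (B * x - r)))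

lemma dilationEq_iff {A : Fin B → Matrix (Fin d) (Fin d) ℂ} {ρ : ℝ} {ω : ℂ} {V : Fin d → ℂ}
    {Φ : ℝ → Fin d → ℂ} :
    DilationEq A ρ ω V Φ ↔ Φ 0 = 0 ∧ Φ 1 = V ∧ IsDilationStep A ((ρ : ℂ) * ω) V Φ Φ :=
  Iff.rfl

section DilationStep

variable {A : Fin B → Matrix (Fin d) (Fin d) ℂ} {μ : ℂ} {V : Fin d → ℂ} {lam : ℝ}

lemma nonneg_of_forall_norm_le (hB : 0 < B) (hA : ∀ r, ‖A r‖ ≤ lam) : 0 ≤ lam :=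
  (norm_nonneg _).trans (hA ⟨0, hB⟩)

lemma ne_zero_of_lt_norm (hB : 0 < B) (hA : ∀ r, ‖A r‖ ≤ lam) (hlam : lam < ‖μ‖) : μ ≠ 0 :=
  norm_pos_iff.mp ((nonneg_of_forall_norm_le hB hA).trans_lt hlam)

lemma div_norm_mem_Ico (hB : 0 < B) (hA : ∀ r, ‖A r‖ ≤ lam) (hlam : lam < ‖μ‖) :
    lam / ‖μ‖ ∈ Ico (0 : ℝ) 1 :=
  ⟨div_nonneg (nonneg_of_forall_norm_le hB hA) (norm_nonneg _),
    (div_lt_one ((nonneg_of_forall_norm_le hB hA).trans_lt hlam)).mpr hlam⟩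

lemma IsDilationStep.norm_sub_le (hB : 0 < B) (hA : ∀ r, ‖A r‖ ≤ lam)
    {Φ₁ Φ₁' Φ₂ Φ₂' : ℝ → Fin d → ℂ} (h₁ : IsDilationStep A μ V Φ₁ Φ₁')
    (h₂ : IsDilationStep A μ V Φ₂ Φ₂') (h_one : Φ₁' 1 = Φ₂' 1) {M : ℝ}
    (hM : ∀ y ∈ Icc (0 : ℝ) 1, ‖Φ₁ y - Φ₂ y‖ ≤ M) {x : ℝ} (hx : x ∈ Icc (0 : ℝ) 1) :
    ‖Φ₁' x - Φ₂' x‖ ≤ lam / ‖μ‖ * M := by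
  have hM₀ : 0 ≤ M := (norm_nonneg _).trans (hM 0 (left_mem_Icc.mpr zero_le_one))
  have hlam : 0 ≤ lam := nonneg_of_forall_norm_le hB hA
  rcases hx.2.eq_or_lt with rfl | hx₁
  · rw [h_one, sub_self, norm_zero]
    positivity
  obtain ⟨r, hr₁, hr₂⟩ := exists_mem_digit hB ⟨hx.1, hx₁⟩
  have hy := Ico_subset_Icc_self (sub_mem_Ico_of_mem_digit hB hr₁ hr₂)
  rw [h₁ r x hr₁ hr₂, h₂ r x hr₁ hr₂, ← smul_sub, add_sub_add_left_eq_sub, ← Matrix.mulVec_sub,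
    norm_smul, norm_inv, div_mul_eq_mul_div, div_eq_inv_mul]
  gcongr
  exact (Matrix.linfty_opNorm_mulVec _ _).trans (mul_le_mul (hA r) (hM _ hy) (norm_nonneg _) hlam)

lemma norm_sub_le_pow_of_isDilationStep (hB : 0 < B) (hA : ∀ r, ‖A r‖ ≤ lam)
    {Φ Ψ : ℕ → ℝ → Fin d → ℂ} (hΦ : ∀ K, IsDilationStep A μ V (Φ K) (Φ (K + 1)))
    (hΨ : ∀ K, IsDilationStep A μ V (Ψ K) (Ψ (K + 1))) (h_one : ∀ K, Φ (K + 1) 1 = Ψ (K + 1) 1)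
    {M : ℝ} (hM : ∀ y ∈ Icc (0 : ℝ) 1, ‖Φ 0 y - Ψ 0 y‖ ≤ M) (K : ℕ) {x : ℝ}
    (hx : x ∈ Icc (0 : ℝ) 1) : ‖Φ K x - Ψ K x‖ ≤ (lam / ‖μ‖) ^ K * M := by
  induction K generalizing x with
  | zero => simpa using hM x hx
  | succ K ih =>
    rw [pow_succ', mul_assoc]
    exact (hΦ K).norm_sub_le hB hA (hΨ K) (h_one K) (fun y hy => ih hy) hx

lemma IsDilationStep.of_tendsto {Φ : ℕ → ℝ → Fin d → ℂ} {Φ' : ℝ → Fin d → ℂ}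
    (hΦ : ∀ K, IsDilationStep A μ V (Φ K) (Φ (K + 1)))
    (hlim : ∀ x ∈ Icc (0 : ℝ) 1, Tendsto (fun K => Φ K x) atTop (𝓝 (Φ' x))) :
    IsDilationStep A μ V Φ' Φ' := by
  intro r x h₁ h₂
  have hr : B * x - r ∈ Icc (0 : ℝ) 1 :=
    Ico_subset_Icc_self (sub_mem_Ico_of_mem_digit r.pos h₁ h₂)
  have hx : x ∈ Icc (0 : ℝ) 1 := Ico_subset_Icc_self (mem_Ico_of_mem_digit h₁ h₂)
  have hA : Continuous fun v => A r *ᵥ v := continuous_const.matrix_mulVec continuous_id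
  refine tendsto_nhds_unique ((hlim x hx).comp (tendsto_add_atTop_nat 1)) ?_
  refine (((hA.tendsto _).comp (hlim _ hr)).const_add _ |>.const_smul μ⁻¹).congr fun K => ?_
  exact (hΦ K r x h₁ h₂).symm

lemma IsDilationStep.apply_zero_eq_zero (hB : 0 < B) (hA : ∀ r, ‖A r‖ ≤ lam)
    (hlam : lam < ‖μ‖) {Φ : ℝ → Fin d → ℂ} (hΦ : IsDilationStep A μ V Φ Φ) : Φ 0 = 0 := by
  have hfix : Φ 0 = μ⁻¹ • (A ⟨0, hB⟩ *ᵥ Φ 0) := by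
    simpa [Fin.lt_def] using hΦ ⟨0, hB⟩ 0 (by simp) (by simp [hB])
  have hle : ‖Φ 0‖ ≤ lam / ‖μ‖ * ‖Φ 0‖ := by
    conv_lhs => rw [hfix]
    rw [norm_smul, norm_inv, div_mul_eq_mul_div, div_eq_inv_mul]
    gcongr
    exact (Matrix.linfty_opNorm_mulVec _ _).trans (by gcongr; exact hA _)
  have hq := (div_norm_mem_Ico hB hA hlam).2
  exact norm_le_zero_iff.mp (by nlinarith [norm_nonneg (Φ 0)])

lemma IsDilationStep.eqOn (hB : 0 < B) (hA : ∀ r, ‖A r‖ ≤ lam) (hlam : lam < ‖μ‖)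
    {Φ Ψ : ℝ → Fin d → ℂ} (hΦ : IsDilationStep A μ V Φ Φ) (hΨ : IsDilationStep A μ V Ψ Ψ)
    (h_one : Φ 1 = Ψ 1) {M : ℝ} (hM : ∀ y ∈ Icc (0 : ℝ) 1, ‖Φ y - Ψ y‖ ≤ M) :
    EqOn Φ Ψ (Icc 0 1) := by
  intro x hx
  obtain ⟨hq₀, hq₁⟩ := div_norm_mem_Ico hB hA hlam
  have htend : Tendsto (fun K : ℕ => (lam / ‖μ‖) ^ K * M) atTop (𝓝 0) := by
    simpa using (tendsto_pow_atTop_nhds_zero_of_lt_one hq₀ hq₁).mul_const M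
  rw [← sub_eq_zero, ← norm_le_zero_iff]
  exact ge_of_tendsto' htend fun K => norm_sub_le_pow_of_isDilationStep (Φ := fun _ => Φ)
    (Ψ := fun _ => Ψ) hB hA (fun _ => hΦ) (fun _ => hΨ) (fun _ => h_one) hM K hx

end DilationStep

def scaledRunSum (A : Fin B → Matrix (Fin d) (Fin d) ℂ) (C : Fin d → ℂ) (μ : ℂ) (K : ℕ)
    (x : ℝ) : Fin d → ℂ :=
  (μ ^ K)⁻¹ • runSum A C K x

section ScaledRunSum

variable (A : Fin B → Matrix (Fin d) (Fin d) ℂ) (C : Fin d → ℂ) {μ : ℂ}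

lemma scaledRunSum_one (hB : 0 < B) (hC : (∑ r, A r) *ᵥ C = μ • C) (hμ : μ ≠ 0) (K : ℕ) :
    scaledRunSum A C μ K 1 = C := by
  rw [scaledRunSum, runSum_of_one_le A C hB K le_rfl, sum_wordProd_mulVec_of_eigenvector A C hC,
    inv_smul_smul₀ (pow_ne_zero _ hμ)]

lemma isDilationStep_scaledRunSum (hB : 0 < B) (hC : (∑ r, A r) *ᵥ C = μ • C) (hμ : μ ≠ 0)
    (K : ℕ) : IsDilationStep A μ C (scaledRunSum A C μ K) (scaledRunSum A C μ (K + 1)) := by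
  intro r x h₁ h₂
  simp only [scaledRunSum]
  rw [runSum_succ_of_mem_digit A C hB K h₁ h₂, runSum_of_one_le A C hB K le_rfl,
    sum_wordProd_mulVec_of_eigenvector A C hC]
  simp only [Matrix.mulVec_smul, ← Finset.smul_sum]
  rw [smul_add, smul_add, smul_smul, smul_smul, pow_succ', mul_inv,
    mul_assoc, inv_mul_cancel₀ (pow_ne_zero _ hμ), mul_one, mul_comm]

lemma exists_norm_scaledRunSum_le (K : ℕ) : ∃ M, ∀ x, ‖scaledRunSum A C μ K x‖ ≤ M :=
  ⟨_, fun x => (norm_smul _ _).trans_le <|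
    mul_le_mul_of_nonneg_left (norm_runSum_le A C K x) (norm_nonneg _)⟩

lemma norm_scaledRunSum_sub_le (hB : 0 < B) {lam : ℝ} (hA : ∀ r, ‖A r‖ ≤ lam) (K : ℕ)
    {x y : ℝ} (hxy : |x - y| ≤ ((B : ℝ) ^ K)⁻¹) :
    ‖scaledRunSum A C μ K x - scaledRunSum A C μ K y‖ ≤ (lam / ‖μ‖) ^ K * ‖C‖ := by
  have hlam : 0 ≤ lam := nonneg_of_forall_norm_le hB hA
  rw [scaledRunSum, scaledRunSum, ← smul_sub, norm_smul, norm_inv, norm_pow, div_pow,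
    div_eq_inv_mul, mul_assoc]
  gcongr
  exact norm_runSum_sub_le A C hB hA hlam K hxy

end ScaledRunSum

def dilationLimit (A : Fin B → Matrix (Fin d) (Fin d) ℂ) (C : Fin d → ℂ) (μ : ℂ) (x : ℝ) :
    Fin d → ℂ :=
  limUnder atTop fun K => scaledRunSum A C μ K x

section DilationLimit

variable {A : Fin B → Matrix (Fin d) (Fin d) ℂ} {C : Fin d → ℂ} {μ : ℂ} {lam : ℝ}

lemma exists_dist_scaledRunSum_succ_le (hB : 0 < B) (hC : (∑ r, A r) *ᵥ C = μ • C)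
    (hA : ∀ r, ‖A r‖ ≤ lam) (hlam : lam < ‖μ‖) :
    ∃ M, ∀ K, ∀ x ∈ Icc (0 : ℝ) 1,
      dist (scaledRunSum A C μ K x) (scaledRunSum A C μ (K + 1) x) ≤ M * (lam / ‖μ‖) ^ K := by
  have hμ := ne_zero_of_lt_norm hB hA hlam
  obtain ⟨M₀, hM₀⟩ := exists_norm_scaledRunSum_le A C (μ := μ) 0
  obtain ⟨M₁, hM₁⟩ := exists_norm_scaledRunSum_le A C (μ := μ) 1
  refine ⟨M₀ + M₁, fun K x hx => ?_⟩
  rw [dist_eq_norm, mul_comm]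
  have hstep := isDilationStep_scaledRunSum A C hB hC hμ
  exact norm_sub_le_pow_of_isDilationStep (Ψ := fun K => scaledRunSum A C μ (K + 1)) hB hA
    hstep (fun K => hstep (K + 1))
    (fun K => by rw [scaledRunSum_one A C hB hC hμ, scaledRunSum_one A C hB hC hμ])
    (fun y _ => (norm_sub_le _ _).trans (add_le_add (hM₀ y) (hM₁ y))) K hx

lemma tendsto_scaledRunSum (hB : 0 < B) (hC : (∑ r, A r) *ᵥ C = μ • C)
    (hA : ∀ r, ‖A r‖ ≤ lam) (hlam : lam < ‖μ‖) {x : ℝ} (hx : x ∈ Icc (0 : ℝ) 1) :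
    Tendsto (fun K => scaledRunSum A C μ K x) atTop (𝓝 (dilationLimit A C μ x)) := by
  obtain ⟨M, hM⟩ := exists_dist_scaledRunSum_succ_le hB hC hA hlam
  exact (cauchySeq_of_le_geometric _ M (div_norm_mem_Ico hB hA hlam).2
    fun K => hM K x hx).tendsto_limUnder

lemma exists_norm_scaledRunSum_sub_dilationLimit_le (hB : 0 < B)
    (hC : (∑ r, A r) *ᵥ C = μ • C) (hA : ∀ r, ‖A r‖ ≤ lam) (hlam : lam < ‖μ‖) :
    ∃ M, ∀ K, ∀ x ∈ Icc (0 : ℝ) 1,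
      ‖scaledRunSum A C μ K x - dilationLimit A C μ x‖ ≤ M * (lam / ‖μ‖) ^ K := by
  obtain ⟨M, hM⟩ := exists_dist_scaledRunSum_succ_le hB hC hA hlam
  refine ⟨M / (1 - lam / ‖μ‖), fun K x hx => ?_⟩
  rw [← dist_eq_norm, div_mul_eq_mul_div]
  exact dist_le_of_le_geometric_of_tendsto _ M (div_norm_mem_Ico hB hA hlam).2
    (fun K => hM K x hx) (tendsto_scaledRunSum hB hC hA hlam hx) K

lemma dilationLimit_one (hB : 0 < B) (hC : (∑ r, A r) *ᵥ C = μ • C)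
    (hA : ∀ r, ‖A r‖ ≤ lam) (hlam : lam < ‖μ‖) : dilationLimit A C μ 1 = C := by
  refine tendsto_nhds_unique (tendsto_scaledRunSum hB hC hA hlam (right_mem_Icc.mpr zero_le_one)) ?_
  simp only [scaledRunSum_one A C hB hC (ne_zero_of_lt_norm hB hA hlam)]
  exact tendsto_const_nhds

lemma isDilationStep_dilationLimit (hB : 0 < B) (hC : (∑ r, A r) *ᵥ C = μ • C)
    (hA : ∀ r, ‖A r‖ ≤ lam) (hlam : lam < ‖μ‖) :
    IsDilationStep A μ C (dilationLimit A C μ) (dilationLimit A C μ) :=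
  .of_tendsto (isDilationStep_scaledRunSum A C hB hC (ne_zero_of_lt_norm hB hA hlam))
    fun _ hx => tendsto_scaledRunSum hB hC hA hlam hx

lemma uniformContinuousOn_dilationLimit (hB : 0 < B) (hC : (∑ r, A r) *ᵥ C = μ • C)
    (hA : ∀ r, ‖A r‖ ≤ lam) (hlam : lam < ‖μ‖) :
    UniformContinuousOn (dilationLimit A C μ) (Icc 0 1) := by
  obtain ⟨M, hM⟩ := exists_norm_scaledRunSum_sub_dilationLimit_le hB hC hA hlam
  obtain ⟨hq₀, hq₁⟩ := div_norm_mem_Ico hB hA hlam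
  have htend : Tendsto (fun K : ℕ => (lam / ‖μ‖) ^ K * (2 * M + ‖C‖)) atTop (𝓝 0) := by
    simpa using (tendsto_pow_atTop_nhds_zero_of_lt_one hq₀ hq₁).mul_const (2 * M + ‖C‖)
  rw [Metric.uniformContinuousOn_iff_le]
  intro ε hε
  obtain ⟨K, hK⟩ := (htend.eventually (ge_mem_nhds hε)).exists
  refine ⟨((B : ℝ) ^ K)⁻¹, by positivity, fun x hx y hy hxy => ?_⟩
  calc dist (dilationLimit A C μ x) (dilationLimit A C μ y)
      ≤ dist (dilationLimit A C μ x) (scaledRunSum A C μ K x) +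
          dist (scaledRunSum A C μ K x) (scaledRunSum A C μ K y) +
          dist (scaledRunSum A C μ K y) (dilationLimit A C μ y) := dist_triangle4 _ _ _ _
    _ ≤ M * (lam / ‖μ‖) ^ K + (lam / ‖μ‖) ^ K * ‖C‖ + M * (lam / ‖μ‖) ^ K := by
        rw [dist_comm, dist_eq_norm, dist_eq_norm, dist_eq_norm]
        gcongr
        · exact hM K x hx
        · exact norm_scaledRunSum_sub_le A C hB hA K hxy
        · exact hM K y hy
    _ = (lam / ‖μ‖) ^ K * (2 * M + ‖C‖) := by ring
    _ ≤ ε := hK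

end DilationLimit

theorem runSum_eigenvector_speed_general (B d : ℕ) (hB : 2 ≤ B)
    (A : Fin B → Matrix (Fin d) (Fin d) ℂ) (C : Fin d → ℂ)
    (ρ : ℝ) (hρ : 0 < ρ) (ω : ℂ) (hω : ‖ω‖ = 1)
    (hC : (∑ r, A r).mulVec C = ((ρ : ℂ) * ω) • C)
    -- hypothesis (rsr)
    (lam : ℝ) (hlam : 0 < lam) (hlamρ : lam < ρ) (hA : ∀ r, ‖A r‖ ≤ lam) :
    ∃ F : ℝ → Fin d → ℂ,
      ContinuousOn F (Set.Icc 0 1) ∧ DilationEq A ρ ω C F ∧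
      (∀ Ψ : ℝ → Fin d → ℂ, ContinuousOn Ψ (Set.Icc 0 1) → DilationEq A ρ ω C Ψ →
        Set.EqOn Ψ F (Set.Icc 0 1)) ∧
      (fun K : ℕ => ⨆ x : Set.Icc (0:ℝ) 1,
          ‖(((ρ : ℂ) * ω) ^ K)⁻¹ • runSum A C K x - F x‖) =O[atTop]
        fun K => (lam / ρ) ^ K := by
  have hB₀ : 0 < B := by omega
  have hμ : ‖(ρ : ℂ) * ω‖ = ρ := by
    rw [norm_mul, hω, mul_one, Complex.norm_real, Real.norm_of_nonneg hρ.le]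
  replace hlamρ : lam < ‖(ρ : ℂ) * ω‖ := by rwa [hμ]
  have hF := isDilationStep_dilationLimit hB₀ hC hA hlamρ
  have hFc := (uniformContinuousOn_dilationLimit hB₀ hC hA hlamρ).continuousOn
  have hF₁ := dilationLimit_one hB₀ hC hA hlamρ
  refine ⟨dilationLimit A C _, hFc,
    dilationEq_iff.mpr ⟨hF.apply_zero_eq_zero hB₀ hA hlamρ, hF₁, hF⟩, fun Ψ hΨc hΨ => ?_, ?_⟩
  · obtain ⟨-, hΨ₁, hΨ⟩ := dilationEq_iff.mp hΨ
    obtain ⟨M, hM⟩ := isCompact_Icc.exists_bound_of_continuousOn (hΨc.sub hFc)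
    exact hΨ.eqOn hB₀ hA hlamρ hF (hΨ₁.trans hF₁.symm) hM
  · obtain ⟨M, hM⟩ := exists_norm_scaledRunSum_sub_dilationLimit_le hB₀ hC hA hlamρ
    rw [hμ] at hM
    have : Nonempty (Icc (0 : ℝ) 1) := ⟨⟨0, left_mem_Icc.mpr zero_le_one⟩⟩
    refine isBigO_of_le' (c := M) _ fun K => ?_
    rw [Real.norm_of_nonneg (Real.iSup_nonneg fun _ => norm_nonneg _),
      Real.norm_of_nonneg (by positivity)]
    exact ciSup_le fun x => hM K x x.2

/-- if `C` is an eigenvector of `Q` for `ρω` and (rsr) holds, the speed of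
convergence of `(ρω)^{-K} S_K` to the dilation solution is `O((λ/ρ)^K)`. -/
theorem runSum_eigenvector_speed (B d : ℕ) (hB : 2 ≤ B) (hd : 1 ≤ d)
    (A : Fin B → Matrix (Fin d) (Fin d) ℂ) (C : Fin d → ℂ)
    (ρ : ℝ) (hρ : 0 < ρ) (ω : ℂ) (hω : ‖ω‖ = 1)
    (hC : (∑ r, A r).mulVec C = ((ρ : ℂ) * ω) • C)
    -- hypothesis (rsr)
    (lam : ℝ) (hlam : 0 < lam) (hlamρ : lam < ρ) (hA : ∀ r, ‖A r‖ ≤ lam) :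
    ∃ F : ℝ → Fin d → ℂ,
      ContinuousOn F (Set.Icc 0 1) ∧ DilationEq A ρ ω C F ∧
      (∀ Ψ : ℝ → Fin d → ℂ, ContinuousOn Ψ (Set.Icc 0 1) → DilationEq A ρ ω C Ψ →
        Set.EqOn Ψ F (Set.Icc 0 1)) ∧
      (fun K : ℕ => ⨆ x : Set.Icc (0:ℝ) 1,
          ‖(((ρ : ℂ) * ω) ^ K)⁻¹ • runSum A C K x - F x‖) =O[atTop]
        fun K => (lam / ρ) ^ K :=
  runSum_eigenvector_speed_general B d hB A C ρ hρ ω hω hC lam hlam hlamρ hA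
end
end

section
/- Assume QV = ρωV with ρ > 0, |ω| = 1, and hypothesis (rsr). Then the unique continuous solution F of the basic dilation equation is Hölder with exponent log_B(ρ/λ): there is a constant c ≥ 0 such that ‖F(y) − F(x)‖ ≤ c |y − x|^{log_B(ρ/λ)} for all x, y ∈ [0,1]. -/
open scoped Classical

attribute [local instance] Matrix.linftyOpNormedAddCommGroup Matrix.linftyOpNormedRing

noncomputable section

/-!
Writing `F` as a continuous path `f` from `0` to `V` on `[0, 1]`, the dilation equation says that
`f` is a fixed point of an operator `T`. On each digit interval only one digit `r` of `T f` depends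
on `f`, through `(ρω)⁻¹ A_r`, so by (rsr) `T` contracts the sup distance of such paths by `λ/ρ`,
and Banach's fixed-point theorem gives the unique solution. Iterating the equation `n` times, the
oscillation of `F` on a `B`-adic interval of length `B⁻ⁿ` is at most `(λ/ρ)ⁿ = (B⁻ⁿ) ^ log_B(ρ/λ)`
times its total oscillation; any two points at distance at most `B⁻ⁿ` lie in one or two adjacent
such intervals, which gives the Hölder bound.
-/

open Set Function

section Cells

variable {B : ℕ}

def cell (B n j : ℕ) : Set ℝ := Icc (j / (B : ℝ) ^ n) ((j + 1) / (B : ℝ) ^ n)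

lemma cell_one (j : ℕ) : cell B 1 j = Icc (j / (B : ℝ)) ((j + 1) / B) := by
  simp [cell]

lemma cell_subset_Icc (hB : 0 < B) {n j : ℕ} (hj : j < B ^ n) : cell B n j ⊆ Icc 0 1 := by
  have hBn : (0 : ℝ) < (B : ℝ) ^ n := by positivity
  have hj' : (j : ℝ) + 1 ≤ (B : ℝ) ^ n := by exact_mod_cast hj
  exact Icc_subset_Icc (by positivity) ((div_le_one hBn).2 hj')

lemma mem_cell_succ (hB : 0 < B) {n r j : ℕ} (hj : j < B ^ n) {x : ℝ}
    (hx : x ∈ cell B (n + 1) (r * B ^ n + j)) :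
    x ∈ cell B 1 r ∧ B * x - r ∈ cell B n j := by
  have hB' : (0 : ℝ) < B := by exact_mod_cast hB
  have hBn : (0 : ℝ) < (B : ℝ) ^ n := by positivity
  have hj' : (j : ℝ) + 1 ≤ (B : ℝ) ^ n := by exact_mod_cast hj
  rw [cell_one]
  simp only [cell, mem_Icc, pow_succ, Nat.cast_add, Nat.cast_mul, Nat.cast_pow] at hx ⊢
  rw [div_le_iff₀ (by positivity), le_div_iff₀ (by positivity)] at hx
  rw [div_le_iff₀ hB', le_div_iff₀ hB', div_le_iff₀ hBn, le_div_iff₀ hBn]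
  refine ⟨⟨?_, ?_⟩, ?_, ?_⟩ <;> nlinarith [hx.1, hx.2]

lemma exists_mem_cell_of_mem_Ico (hB : 0 < B) (n : ℕ) {x : ℝ} (hx : x ∈ Ico (0 : ℝ) 1) :
    ∃ j < B ^ n, j / (B : ℝ) ^ n ≤ x ∧ x < (j + 1) / (B : ℝ) ^ n := by
  have hBn : (0 : ℝ) < (B : ℝ) ^ n := by positivity
  have hxB : 0 ≤ (B : ℝ) ^ n * x := mul_nonneg hBn.le hx.1
  refine ⟨⌊(B : ℝ) ^ n * x⌋₊, ?_, ?_, ?_⟩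
  · rw [Nat.floor_lt hxB]
    push_cast
    nlinarith [hx.2]
  · rw [div_le_iff₀ hBn, mul_comm x]
    exact Nat.floor_le hxB
  · rw [lt_div_iff₀ hBn, mul_comm x]
    exact Nat.lt_floor_add_one _

lemma exists_mem_cell (hB : 0 < B) (n : ℕ) {x : ℝ} (hx : x ∈ Icc (0 : ℝ) 1) :
    ∃ j < B ^ n, x ∈ cell B n j := by
  rcases hx.2.lt_or_eq with hx1 | rfl
  · obtain ⟨j, hj, h1, h2⟩ := exists_mem_cell_of_mem_Ico hB n ⟨hx.1, hx1⟩
    exact ⟨j, hj, h1, h2.le⟩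
  · have hBn : 0 < B ^ n := pow_pos hB n
    have hBn' : (0 : ℝ) < (B : ℝ) ^ n := by positivity
    have hlast : ((B ^ n - 1 : ℕ) : ℝ) + 1 = (B : ℝ) ^ n := by
      exact_mod_cast Nat.sub_add_cancel hBn
    refine ⟨B ^ n - 1, Nat.sub_lt hBn one_pos, ?_, ?_⟩
    · rw [div_le_one hBn']
      linarith
    · rw [hlast, div_self hBn'.ne']
lemma mem_Icc_of_mem_digit {B : ℕ} {r : Fin B} {x : ℝ}
    (hx : x ∈ Icc ((r : ℝ) / B) (((r : ℝ) + 1) / B)) :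
    x ∈ Icc (0 : ℝ) 1 ∧ B * x - r ∈ Icc (0 : ℝ) 1 := by
  have hB' : (0 : ℝ) < B := by exact_mod_cast r.pos
  have hr : (r : ℝ) + 1 ≤ B := by exact_mod_cast r.2
  rw [mem_Icc, div_le_iff₀ hB', le_div_iff₀ hB'] at hx
  refine ⟨⟨?_, ?_⟩, ?_, ?_⟩ <;> nlinarith [hx.1, hx.2]

end Cells

section SelfSimilar

variable {E : Type*} [SeminormedAddCommGroup E] {B : ℕ} {Φ : ℝ → E}

lemma norm_sub_le_of_mem_cell (hB : 0 < B) {g : Fin B → E → E} {q M : ℝ} (hq : 0 ≤ q)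
    (hg : ∀ r u v, ‖g r u - g r v‖ ≤ q * ‖u - v‖)
    (hΦ : ∀ r : Fin B, ∀ x ∈ cell B 1 r, Φ x = g r (Φ (B * x - r)))
    (hM : ∀ x ∈ Icc (0 : ℝ) 1, ∀ y ∈ Icc (0 : ℝ) 1, ‖Φ y - Φ x‖ ≤ M) (n : ℕ) :
    ∀ j < B ^ n, ∀ x ∈ cell B n j, ∀ y ∈ cell B n j, ‖Φ y - Φ x‖ ≤ M * q ^ n := by
  induction n with
  | zero =>
    intro j hj x hx y hy
    simpa using hM x (cell_subset_Icc hB hj hx) y (cell_subset_Icc hB hj hy)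
  | succ n ih =>
    intro j hj x hx y hy
    have hj' : j % B ^ n < B ^ n := Nat.mod_lt j (pow_pos hB n)
    set r : Fin B := ⟨j / B ^ n, Nat.div_lt_of_lt_mul (by rwa [← pow_succ])⟩
    have hdecomp : j = r * B ^ n + j % B ^ n := (Nat.div_add_mod' j (B ^ n)).symm
    rw [hdecomp] at hx hy
    obtain ⟨hx₁, hx'⟩ := mem_cell_succ hB hj' hx
    obtain ⟨hy₁, hy'⟩ := mem_cell_succ hB hj' hy
    calc ‖Φ y - Φ x‖ = ‖g r (Φ (B * y - r)) - g r (Φ (B * x - r))‖ := by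
          rw [← hΦ r x hx₁, ← hΦ r y hy₁]
      _ ≤ q * (M * q ^ n) :=
          (hg _ _ _).trans (mul_le_mul_of_nonneg_left (ih _ hj' _ hx' _ hy') hq)
      _ = M * q ^ (n + 1) := by ring

/-- Two points at distance at most `B⁻ⁿ` lie in one cell of level `n` or in two adjacent ones. -/
lemma norm_sub_le_of_abs_sub_le (hB : 0 < B) {C : ℕ → ℝ}
    (hcell : ∀ n, ∀ j < B ^ n, ∀ x ∈ cell B n j, ∀ y ∈ cell B n j, ‖Φ y - Φ x‖ ≤ C n)
    (n : ℕ) {x y : ℝ} (hx : x ∈ Icc (0 : ℝ) 1) (hy : y ∈ Icc (0 : ℝ) 1)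
    (hxy : |y - x| ≤ ((B : ℝ) ^ n)⁻¹) :
    ‖Φ y - Φ x‖ ≤ 2 * C n := by
  wlog hle : x ≤ y generalizing x y
  · rw [norm_sub_rev]
    exact this hy hx (by rwa [abs_sub_comm]) (le_of_not_ge hle)
  have hBn : (0 : ℝ) < (B : ℝ) ^ n := by positivity
  obtain ⟨j, hj, hxj⟩ := exists_mem_cell hB n hx
  set m := min y ((j + 1) / (B : ℝ) ^ n)
  have hm : m ∈ cell B n j := ⟨le_min (hxj.1.trans hle) (hxj.1.trans hxj.2), min_le_right _ _⟩
  have hmx : ‖Φ m - Φ x‖ ≤ C n := hcell n j hj x hxj m hm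
  have hym : ‖Φ y - Φ m‖ ≤ C n := by
    rcases le_or_gt y ((j + 1) / (B : ℝ) ^ n) with hy' | hy'
    · rw [show m = y from min_eq_left hy', sub_self, norm_zero]
      exact (norm_nonneg _).trans hmx
    · rw [show m = (j + 1) / (B : ℝ) ^ n from min_eq_right hy'.le]
      have hj1 : j + 1 < B ^ n := by
        have : ((j + 1 : ℕ) : ℝ) / (B : ℝ) ^ n < 1 := by push_cast; linarith [hy.2]
        exact_mod_cast (div_lt_one hBn).1 this
      have hy'' : y ≤ ((j : ℝ) + 1 + 1) / (B : ℝ) ^ n := by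
        rw [abs_of_nonneg (sub_nonneg.2 hle)] at hxy
        rw [add_div _ 1, one_div]
        linarith [hxj.2]
      have hjj : ((j : ℝ) + 1) / (B : ℝ) ^ n ≤ ((j : ℝ) + 1 + 1) / (B : ℝ) ^ n := by
        gcongr
        linarith
      refine hcell n (j + 1) hj1 _ ?_ y ?_ <;> simp only [cell, Nat.cast_succ]
      exacts [⟨le_rfl, hjj⟩, ⟨hy'.le, hy''⟩]
  calc ‖Φ y - Φ x‖ ≤ ‖Φ y - Φ m‖ + ‖Φ m - Φ x‖ := norm_sub_le_norm_sub_add_norm_sub _ _ _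
    _ ≤ 2 * C n := by linarith

lemma norm_sub_le_mul_abs_rpow {b q C α : ℝ} (hb : 1 < b) (hα : 0 ≤ α) (hq : q = (b ^ α)⁻¹)
    (hC : 0 ≤ C)
    (h : ∀ n : ℕ, ∀ x ∈ Icc (0 : ℝ) 1, ∀ y ∈ Icc (0 : ℝ) 1, |y - x| ≤ (b ^ n)⁻¹ →
      ‖Φ y - Φ x‖ ≤ C * q ^ n)
    {x y : ℝ} (hx : x ∈ Icc (0 : ℝ) 1) (hy : y ∈ Icc (0 : ℝ) 1) :
    ‖Φ y - Φ x‖ ≤ C * b ^ α * |y - x| ^ α := by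
  have hb0 : 0 < b := one_pos.trans hb
  rcases eq_or_ne x y with rfl | hxy
  · rw [sub_self, norm_zero]
    positivity
  have ht : 0 < |y - x| := abs_pos.2 (sub_ne_zero.2 hxy.symm)
  have ht1 : |y - x| ≤ 1 := abs_sub_le_iff.2 ⟨by linarith [hy.2, hx.1], by linarith [hx.2, hy.1]⟩
  obtain ⟨n, hn, hn'⟩ := exists_nat_pow_near ((one_le_inv₀ ht).2 ht1) hb
  calc ‖Φ y - Φ x‖ ≤ C * q ^ n := h n x hx y hy ((le_inv_comm₀ ht (by positivity)).2 hn)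
    _ = C * b ^ α * ((b ^ (n + 1))⁻¹) ^ α := by
        rw [hq, Real.inv_rpow (by positivity), ← Real.rpow_pow_comm hb0.le, inv_pow, pow_succ]
        field_simp
    _ ≤ C * b ^ α * |y - x| ^ α := by
        gcongr
        exact (inv_lt_of_inv_lt₀ ht hn').le

end SelfSimilar

open unitInterval

section Dilation

variable {B d : ℕ} (A : Fin B → Matrix (Fin d) (Fin d) ℂ) (ρ : ℝ) (ω : ℂ) (V : Fin d → ℂ)

/-- `DilationEq A ρ ω V Φ` says `Φ x = dilationStep A ρ ω V r (Φ (B * x - r))` on the `r`-th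
digit interval. -/
def dilationStep (r : Fin B) (y : Fin d → ℂ) : Fin d → ℂ :=
  ((ρ : ℂ) * ω)⁻¹ •
    ((∑ s ∈ Finset.univ.filter fun s : Fin B => s < r, (A s).mulVec V) + (A r).mulVec y)

variable {A ρ ω V} in
lemma norm_dilationStep_sub_le {lam : ℝ} (hρ : 0 < ρ) (hω : ‖ω‖ = 1) {r : Fin B}
    (hA : ‖A r‖ ≤ lam) (y z : Fin d → ℂ) :
    ‖dilationStep A ρ ω V r y - dilationStep A ρ ω V r z‖ ≤ lam / ρ * ‖y - z‖ := by
  have hc : ‖((ρ : ℂ) * ω)⁻¹‖ = ρ⁻¹ := by simp [hω, abs_of_pos hρ]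
  calc ‖dilationStep A ρ ω V r y - dilationStep A ρ ω V r z‖
      = ‖((ρ : ℂ) * ω)⁻¹ • (A r).mulVec (y - z)‖ := by
        rw [dilationStep, dilationStep, ← smul_sub, add_sub_add_left_eq_sub, Matrix.mulVec_sub]
    _ ≤ ρ⁻¹ * (‖A r‖ * ‖y - z‖) := by
        rw [norm_smul, hc]
        gcongr
        exact Matrix.linfty_opNorm_mulVec _ _
    _ ≤ lam / ρ * ‖y - z‖ := by
        rw [div_eq_inv_mul, mul_assoc]
        gcongr

/-- Extending `f` by constants outside `[0, 1]`, the digits `s < r`, `s = r`, `s > r` contribute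
`A s V`, `A r (f (B x - r))` and `0` on the `r`-th digit interval, as in the dilation equation. -/
def transfer (f : C(I, Fin d → ℂ)) : C(I, Fin d → ℂ) where
  toFun x := ((ρ : ℂ) * ω)⁻¹ • ∑ s : Fin B, (A s).mulVec (IccExtend zero_le_one f (B * x - s))
  continuous_toFun := by
    have := f.continuous.Icc_extend' (h := zero_le_one)
    fun_prop

def pinned : Set C(I, Fin d → ℂ) := {f | f 0 = 0 ∧ f 1 = V}

lemma isClosed_pinned : IsClosed (pinned V) :=
  (isClosed_eq (continuous_eval_const 0) continuous_const).inter
    (isClosed_eq (continuous_eval_const 1) continuous_const)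

variable {A ρ ω V}

lemma transfer_apply_of_mem {f : C(I, Fin d → ℂ)} (hf : f ∈ pinned V) (r : Fin B) {x : I}
    (hx : (x : ℝ) ∈ Icc ((r : ℝ) / B) (((r : ℝ) + 1) / B)) :
    transfer A ρ ω f x = dilationStep A ρ ω V r (IccExtend zero_le_one f (B * x - r)) := by
  have hB : (0 : ℝ) < B := by exact_mod_cast r.pos
  rw [mem_Icc, div_le_iff₀ hB, le_div_iff₀ hB] at hx
  have hlow : ∑ s ∈ Finset.univ.filter (· < r),
      (A s).mulVec (IccExtend zero_le_one f (B * x - s)) =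
        ∑ s ∈ Finset.univ.filter (· < r), (A s).mulVec V := by
    refine Finset.sum_congr rfl fun s hs => ?_
    have hsr : (s : ℝ) + 1 ≤ r := by exact_mod_cast (Finset.mem_filter.1 hs).2
    rw [IccExtend_of_right_le _ _ (by linarith)]
    exact congrArg _ hf.2
  have hhigh : ∑ s ∈ Finset.univ.filter (¬ · < r),
      (A s).mulVec (IccExtend zero_le_one f (B * x - s)) =
        (A r).mulVec (IccExtend zero_le_one f (B * x - r)) := by
    refine Finset.sum_eq_single_of_mem r (by simp) fun s hs hsr => ?_
    have hrs : (r : ℝ) + 1 ≤ s := by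
      exact_mod_cast lt_of_le_of_ne (not_lt.1 (Finset.mem_filter.1 hs).2) (Ne.symm hsr)
    rw [IccExtend_of_le_left _ _ (by linarith), show f ⟨0, _⟩ = 0 from hf.1, Matrix.mulVec_zero]
  simp only [transfer, ContinuousMap.coe_mk, dilationStep]
  rw [← Finset.sum_filter_add_sum_filter_not _ (· < r), hlow, hhigh]

lemma transfer_apply_zero {f : C(I, Fin d → ℂ)} (hf : f ∈ pinned V) :
    transfer A ρ ω f 0 = 0 := by
  have hs : ∀ s : Fin B, IccExtend zero_le_one f (B * (0 : I) - s) = 0 := fun s =>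
    (IccExtend_of_le_left _ _ (by simp)).trans hf.1
  simp only [transfer, ContinuousMap.coe_mk, hs, Matrix.mulVec_zero, Finset.sum_const_zero,
    smul_zero]

lemma transfer_apply_one (hρ : 0 < ρ) (hω : ‖ω‖ = 1)
    (hV : (∑ r, A r).mulVec V = ((ρ : ℂ) * ω) • V) {f : C(I, Fin d → ℂ)} (hf : f ∈ pinned V) :
    transfer A ρ ω f 1 = V := by
  have hρω : (ρ : ℂ) * ω ≠ 0 :=
    mul_ne_zero (by exact_mod_cast hρ.ne') (norm_ne_zero_iff.1 (by rw [hω]; exact one_ne_zero))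
  have hs : ∀ s : Fin B, IccExtend zero_le_one f (B * (1 : I) - s) = V := fun s => by
    have : (s : ℝ) + 1 ≤ B := by exact_mod_cast s.2
    exact (IccExtend_of_right_le _ _ (by simp; linarith)).trans hf.2
  simp only [transfer, ContinuousMap.coe_mk, hs, ← Matrix.sum_mulVec, hV, smul_smul,
    inv_mul_cancel₀ hρω, one_smul]

lemma mapsTo_transfer (hρ : 0 < ρ) (hω : ‖ω‖ = 1)
    (hV : (∑ r, A r).mulVec V = ((ρ : ℂ) * ω) • V) :
    MapsTo (transfer A ρ ω) (pinned V) (pinned V) := fun _ hf =>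
  ⟨transfer_apply_zero hf, transfer_apply_one hρ hω hV hf⟩

lemma dist_transfer_le {lam : ℝ} (hB : 0 < B) (hρ : 0 < ρ) (hω : ‖ω‖ = 1)
    (hA : ∀ r, ‖A r‖ ≤ lam) {f g : C(I, Fin d → ℂ)} (hf : f ∈ pinned V) (hg : g ∈ pinned V) :
    dist (transfer A ρ ω f) (transfer A ρ ω g) ≤ lam / ρ * dist f g := by
  have hlam : 0 ≤ lam := (norm_nonneg _).trans (hA ⟨0, hB⟩)
  refine (ContinuousMap.dist_le (by positivity)).2 fun x => ?_
  obtain ⟨j, hj, hxj⟩ := exists_mem_cell hB 1 x.2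
  rw [cell_one] at hxj
  rw [pow_one] at hj
  rw [dist_eq_norm, transfer_apply_of_mem hf ⟨j, hj⟩ hxj, transfer_apply_of_mem hg ⟨j, hj⟩ hxj]
  refine (norm_dilationStep_sub_le hρ hω (hA _) _ _).trans
    (mul_le_mul_of_nonneg_left ?_ (by positivity))
  rw [← dist_eq_norm, IccExtend_apply, IccExtend_apply]
  exact ContinuousMap.dist_apply_le_dist _

lemma existsUnique_isFixedPt_transfer_mem_pinned {lam : ℝ} (hB : 0 < B) (hρ : 0 < ρ)
    (hω : ‖ω‖ = 1) (hV : (∑ r, A r).mulVec V = ((ρ : ℂ) * ω) • V)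
    (hA : ∀ r, ‖A r‖ ≤ lam) (hlamρ : lam < ρ) :
    ∃! f, f ∈ pinned V ∧ IsFixedPt (transfer A ρ ω) f := by
  have hlam : 0 ≤ lam := (norm_nonneg _).trans (hA ⟨0, hB⟩)
  have hT := mapsTo_transfer hρ hω hV
  have hK : ContractingWith (⟨lam / ρ, by positivity⟩ : NNReal) (hT.restrict _ _ _) :=
    ⟨(div_lt_one hρ).2 hlamρ,
      LipschitzWith.of_dist_le_mul fun f g => dist_transfer_le hB hρ hω hA f.2 g.2⟩
  have := (isClosed_pinned V).completeSpace_coe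
  have : Nonempty (pinned V) := ⟨⟨⟨fun x => (x : ℝ) • V, by fun_prop⟩, by simp, by simp⟩⟩
  refine ⟨hK.fixedPoint, ⟨hK.fixedPoint.2, congrArg Subtype.val hK.fixedPoint_isFixedPt⟩, ?_⟩
  rintro g ⟨hg, hfix⟩
  exact congrArg Subtype.val (hK.fixedPoint_unique (x := ⟨g, hg⟩) (Subtype.ext hfix))

end Dilation

section Solution

variable {B d : ℕ} {A : Fin B → Matrix (Fin d) (Fin d) ℂ} {ρ : ℝ} {ω : ℂ} {V : Fin d → ℂ}

lemma DilationEq.congr {Φ Ψ : ℝ → Fin d → ℂ} (hΦ : DilationEq A ρ ω V Φ)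
    (hΦΨ : EqOn Φ Ψ (Icc 0 1)) : DilationEq A ρ ω V Ψ := by
  obtain ⟨h0, h1, hstep⟩ := hΦ
  refine ⟨(hΦΨ (left_mem_Icc.2 zero_le_one)).symm.trans h0,
    (hΦΨ (right_mem_Icc.2 zero_le_one)).symm.trans h1, fun r x hx₁ hx₂ => ?_⟩
  obtain ⟨hx, hx'⟩ := mem_Icc_of_mem_digit ⟨hx₁, hx₂.le⟩
  rw [← hΦΨ hx, ← hΦΨ hx']
  exact hstep r x hx₁ hx₂

lemma iccExtend_eq_dilationStep {f : C(I, Fin d → ℂ)} (hf : f ∈ pinned V)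
    (hfix : IsFixedPt (transfer A ρ ω) f) (r : Fin B) {x : ℝ}
    (hx : x ∈ Icc ((r : ℝ) / B) (((r : ℝ) + 1) / B)) :
    IccExtend zero_le_one f x =
      dilationStep A ρ ω V r (IccExtend zero_le_one f (B * x - r)) := by
  have hx01 := (mem_Icc_of_mem_digit hx).1
  rw [IccExtend_of_mem _ _ hx01, ← DFunLike.congr_fun hfix ⟨x, hx01⟩]
  exact transfer_apply_of_mem hf r hx

lemma dilationEq_iccExtend_iff (hB : 0 < B) (hρ : 0 < ρ) (hω : ‖ω‖ = 1)
    (hV : (∑ r, A r).mulVec V = ((ρ : ℂ) * ω) • V) (f : C(I, Fin d → ℂ)) :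
    DilationEq A ρ ω V (IccExtend zero_le_one f) ↔
      f ∈ pinned V ∧ IsFixedPt (transfer A ρ ω) f := by
  constructor
  · rintro ⟨h0, h1, hstep⟩
    have hf : f ∈ pinned V :=
      ⟨(IccExtend_left _ _).symm.trans h0, (IccExtend_right _ _).symm.trans h1⟩
    refine ⟨hf, ContinuousMap.ext fun x => ?_⟩
    rcases x.2.2.lt_or_eq with hx1 | hx1
    · obtain ⟨j, hj, hxj₁, hxj₂⟩ := exists_mem_cell_of_mem_Ico hB 1 ⟨x.2.1, hx1⟩
      simp only [pow_one] at hj hxj₁ hxj₂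
      rw [transfer_apply_of_mem hf ⟨j, hj⟩ ⟨hxj₁, hxj₂.le⟩, ← IccExtend_val zero_le_one f x]
      exact (hstep ⟨j, hj⟩ x hxj₁ hxj₂).symm
    · rw [show x = 1 from Subtype.ext hx1, transfer_apply_one hρ hω hV hf, hf.2]
  · rintro ⟨hf, hfix⟩
    exact ⟨(IccExtend_left _ _).trans hf.1, (IccExtend_right _ _).trans hf.2,
      fun r x hx₁ hx₂ => iccExtend_eq_dilationStep hf hfix r ⟨hx₁, hx₂.le⟩⟩

lemma exists_holder_iccExtend {lam : ℝ} (hB : 2 ≤ B) (hρ : 0 < ρ) (hω : ‖ω‖ = 1)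
    (hlam : 0 < lam) (hlamρ : lam ≤ ρ) (hA : ∀ r, ‖A r‖ ≤ lam) {f : C(I, Fin d → ℂ)}
    (hf : f ∈ pinned V) (hfix : IsFixedPt (transfer A ρ ω) f) :
    ∃ c : ℝ, 0 ≤ c ∧ ∀ x ∈ Icc (0 : ℝ) 1, ∀ y ∈ Icc (0 : ℝ) 1,
      ‖IccExtend zero_le_one f y - IccExtend zero_le_one f x‖ ≤
        c * |y - x| ^ Real.logb B (ρ / lam) := by
  have hB0 : 0 < B := by omega
  have hB1 : (1 : ℝ) < B := by exact_mod_cast hB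
  have hρlam : 0 < ρ / lam := div_pos hρ hlam
  set α := Real.logb B (ρ / lam)
  have hq : lam / ρ = ((B : ℝ) ^ α)⁻¹ := by
    rw [Real.rpow_logb (by positivity) hB1.ne' hρlam, inv_div]
  have hM : ∀ x y : ℝ, ‖IccExtend zero_le_one f y - IccExtend zero_le_one f x‖ ≤ 2 * ‖f‖ := by
    intro x y
    rw [IccExtend_apply, IccExtend_apply, two_mul]
    exact norm_sub_le_of_le (f.norm_coe_le_norm _) (f.norm_coe_le_norm _)
  have hcell := norm_sub_le_of_mem_cell (Φ := IccExtend zero_le_one f) hB0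
    (g := dilationStep A ρ ω V) (q := lam / ρ) (by positivity)
    (fun r => norm_dilationStep_sub_le (V := V) hρ hω (hA r))
    (fun r x hx => iccExtend_eq_dilationStep hf hfix r (by rwa [cell_one] at hx))
    (fun x _ y _ => hM x y)
  refine ⟨2 * (2 * ‖f‖) * B ^ α, by positivity, fun x hx y hy => ?_⟩
  refine norm_sub_le_mul_abs_rpow hB1 ?_ hq (by positivity) (fun n x hx y hy hxy => ?_) hx hy
  · exact Real.logb_nonneg hB1 ((one_le_div hlam).2 hlamρ)
  · rw [mul_assoc]
    exact norm_sub_le_of_abs_sub_le hB0 hcell n hx hy hxy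

end Solution

theorem dilation_solution_holder_general (B d : ℕ) (hB : 2 ≤ B)
    (A : Fin B → Matrix (Fin d) (Fin d) ℂ)
    (ρ : ℝ) (hρ : 0 < ρ) (ω : ℂ) (hω : ‖ω‖ = 1)
    (V : Fin d → ℂ) (hV : (∑ r, A r).mulVec V = ((ρ : ℂ) * ω) • V)
    -- hypothesis (rsr)
    (lam : ℝ) (hlam : 0 < lam) (hlamρ : lam < ρ) (hA : ∀ r, ‖A r‖ ≤ lam) :
    ∃ F : ℝ → Fin d → ℂ,
      ContinuousOn F (Set.Icc 0 1) ∧ DilationEq A ρ ω V F ∧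
      (∀ Ψ : ℝ → Fin d → ℂ, ContinuousOn Ψ (Set.Icc 0 1) → DilationEq A ρ ω V Ψ →
        Set.EqOn Ψ F (Set.Icc 0 1)) ∧
      ∃ c : ℝ, 0 ≤ c ∧ ∀ x ∈ Set.Icc (0:ℝ) 1, ∀ y ∈ Set.Icc (0:ℝ) 1,
        ‖F y - F x‖ ≤ c * |y - x| ^ Real.logb B (ρ / lam) := by
  have hB0 : 0 < B := by omega
  obtain ⟨f, ⟨hf, hfix⟩, huniq⟩ :=
    existsUnique_isFixedPt_transfer_mem_pinned hB0 hρ hω hV hA hlamρ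
  refine ⟨IccExtend zero_le_one f, f.continuous.Icc_extend'.continuousOn,
    (dilationEq_iccExtend_iff hB0 hρ hω hV f).2 ⟨hf, hfix⟩, fun Ψ hΨc hΨ => ?_,
    exists_holder_iccExtend hB hρ hω hlam hlamρ.le hA hf hfix⟩
  let ψ : C(I, Fin d → ℂ) := ⟨(Icc 0 1).domRestrict Ψ, hΨc.domRestrict⟩
  have hψΨ : EqOn (IccExtend zero_le_one ψ) Ψ (Icc 0 1) := fun x hx => IccExtend_of_mem _ _ hx
  have hψ : ψ = f := huniq ψ ((dilationEq_iccExtend_iff hB0 hρ hω hV ψ).1 (hΨ.congr hψΨ.symm))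
  intro x hx
  rw [← hψΨ hx, hψ]

/-- under (rsr), the unique continuous solution of the basic dilation
equation is Hölder with exponent `log_B(ρ/λ)`. -/
theorem dilation_solution_holder (B d : ℕ) (hB : 2 ≤ B) (hd : 1 ≤ d)
    (A : Fin B → Matrix (Fin d) (Fin d) ℂ)
    (ρ : ℝ) (hρ : 0 < ρ) (ω : ℂ) (hω : ‖ω‖ = 1)
    (V : Fin d → ℂ) (hV : (∑ r, A r).mulVec V = ((ρ : ℂ) * ω) • V)
    -- hypothesis (rsr)
    (lam : ℝ) (hlam : 0 < lam) (hlamρ : lam < ρ) (hA : ∀ r, ‖A r‖ ≤ lam) :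
    ∃ F : ℝ → Fin d → ℂ,
      ContinuousOn F (Set.Icc 0 1) ∧ DilationEq A ρ ω V F ∧
      (∀ Ψ : ℝ → Fin d → ℂ, ContinuousOn Ψ (Set.Icc 0 1) → DilationEq A ρ ω V Ψ →
        Set.EqOn Ψ F (Set.Icc 0 1)) ∧
      ∃ c : ℝ, 0 ≤ c ∧ ∀ x ∈ Set.Icc (0:ℝ) 1, ∀ y ∈ Set.Icc (0:ℝ) 1,
        ‖F y - F x‖ ≤ c * |y - x| ^ Real.logb B (ρ / lam) :=
  dilation_solution_holder_general B d hB A ρ hρ ω hω V hV lam hlam hlamρ hA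
end
end

section
/- Under hypotheses (gev) with ρ > 0 and (jsr_λ) with λ < ρ, the system of dilation equations has exactly one solution (F^(0), …, F^(ν−1)) among ν-tuples of continuous functions from [0,1] to ℂ^d satisfying the boundary conditions F^(j)(0) = 0 and F^(j)(1) = V^(j) for 0 ≤ j ≤ ν−1. -/
/-!
Write `c = ρω`. For continuous `Φ : [0,1] → ℂ^d` with `Φ 0 = 0` and `Φ 1 = V`, the `j`-th
dilation equation says that `Φ` is a fixed point of `Φ ↦ c⁻¹ (∑ₛ Aₛ Φ(clamp(B x - s)) - g)`,
with `g = F^(j-1)` (or `0` for `j = 0`); the relation `Q V = c V + g 1` from (gev) makes these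
boundary values invariant. Two such `Φ` agree at `0` and `1`, so at each `x` only the digit `s`
with `x ∈ [s/B, (s+1)/B]` contributes to the difference of their images, and after `n`
iterations the difference at `x` is `c⁻ⁿ A_w (Φ - Ψ)(q)` for some word `w` of length `n` and
some `q`. By (jsr_λ) the `T`-th iterate is therefore a contraction with constant `(λ/ρ)^T`, and
Banach's fixed point theorem solves the equations uniquely, one level at a time.
-/

open scoped Classical BigOperators
open Filter Asymptotics

attribute [local instance] Matrix.linftyOpNormedAddCommGroup Matrix.linftyOpNormedRing

noncomputable section

/-- The system of dilation equations associated with a Jordan family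
`V^(0), …, V^(ν-1)` (hypothesis (gev)). -/
def SystemDil {B d ν : ℕ} (A : Fin B → Matrix (Fin d) (Fin d) ℂ) (ρ : ℝ) (ω : ℂ)
    (V : Fin ν → Fin d → ℂ) (F : Fin ν → ℝ → Fin d → ℂ) : Prop :=
  (∀ j, F j 0 = 0) ∧ (∀ j, F j 1 = V j) ∧
    ∀ x : ℝ, 0 ≤ x → x < 1 → ∀ x₁ : Fin B, (x₁ : ℝ) ≤ B * x → B * x < (x₁ : ℝ) + 1 →
      (∀ h0 : 0 < ν,
        ((ρ : ℂ) * ω) • F ⟨0, h0⟩ x =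
          (∑ s ∈ Finset.univ.filter fun s : Fin B => s < x₁, (A s).mulVec (V ⟨0, h0⟩)) +
            (A x₁).mulVec (F ⟨0, h0⟩ (B * x - (x₁ : ℝ)))) ∧
      ∀ j : ℕ, ∀ hj : j + 1 < ν,
        F ⟨j, Nat.lt_of_succ_lt hj⟩ x + ((ρ : ℂ) * ω) • F ⟨j + 1, hj⟩ x =
          (∑ s ∈ Finset.univ.filter fun s : Fin B => s < x₁,
              (A s).mulVec (V ⟨j + 1, hj⟩)) +
            (A x₁).mulVec (F ⟨j + 1, hj⟩ (B * x - (x₁ : ℝ)))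

open Set Matrix Function unitInterval

theorem ContractingWith.existsUnique_isFixedPt_of_iterate {α : Type*} [MetricSpace α]
    {f : α → α} {s : Set α} (hs : IsComplete s) (hne : s.Nonempty) (hf : MapsTo f s s)
    {K : NNReal} {n : ℕ} (hK : ContractingWith K (hf.restrict f s s)^[n]) :
    ∃! x, x ∈ s ∧ IsFixedPt f x := by
  have := hs.completeSpace_coe
  have := hne.to_subtype
  have hy := hK.isFixedPt_fixedPoint_iterate
  refine ⟨_, ⟨Subtype.property _, congrArg Subtype.val hy⟩, fun x ⟨hxs, hx⟩ => ?_⟩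
  have hx' : IsFixedPt (hf.restrict f s s) ⟨x, hxs⟩ := Subtype.ext hx
  exact congrArg Subtype.val (hK.fixedPoint_unique (hx'.iterate n))

namespace Dilation

variable {B d : ℕ}

theorem wordProd_snoc (A : Fin B → Matrix (Fin d) (Fin d) ℂ) {K : ℕ} (w : Fin K → Fin B)
    (s : Fin B) : wordProd A (Fin.snoc w s : Fin (K + 1) → Fin B) = wordProd A w * A s := by
  rw [wordProd, wordProd, List.ofFn_succ']
  simp

def digitShift (B : ℕ) (s : Fin B) : C(I, I) :=
  ⟨fun p => projIcc 0 1 zero_le_one (B * p - s), by fun_prop⟩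

theorem digitShift_eq_zero {s : Fin B} {p : I} (h : (B : ℝ) * p ≤ s) : digitShift B s p = 0 :=
  projIcc_of_le_left zero_le_one (by linarith)

theorem digitShift_eq_one {s : Fin B} {p : I} (h : (s : ℝ) + 1 ≤ B * p) :
    digitShift B s p = 1 :=
  projIcc_of_right_le zero_le_one (by linarith)

theorem coe_digitShift {s : Fin B} {p : I} (h : (s : ℝ) ≤ B * p) (h' : (B : ℝ) * p ≤ s + 1) :
    (digitShift B s p : ℝ) = B * p - s :=
  congrArg Subtype.val (projIcc_of_mem zero_le_one ⟨by linarith, by linarith⟩)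

@[simp]
theorem digitShift_apply_zero (s : Fin B) : digitShift B s 0 = 0 :=
  digitShift_eq_zero (by simp)

@[simp]
theorem digitShift_apply_one (s : Fin B) : digitShift B s 1 = 1 :=
  digitShift_eq_one (by simpa using (Nat.cast_le (α := ℝ)).2 s.isLt)

theorem exists_digit_of_lt_one [NeZero B] {p : I} (hp : (p : ℝ) < 1) :
    ∃ t : Fin B, (t : ℝ) ≤ B * p ∧ (B : ℝ) * p < t + 1 := by
  have hBp : (B : ℝ) * p < B := by
    simpa using mul_lt_mul_of_pos_left hp (Nat.cast_pos.2 (Nat.pos_of_neZero B))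
  have hBp0 : (0 : ℝ) ≤ B * p := mul_nonneg B.cast_nonneg p.2.1
  exact ⟨⟨⌊(B : ℝ) * p⌋₊, (Nat.floor_lt hBp0).2 hBp⟩, Nat.floor_le hBp0,
    Nat.lt_floor_add_one _⟩

theorem exists_digit [NeZero B] (p : I) :
    ∃ t : Fin B, (t : ℝ) ≤ B * p ∧ (B : ℝ) * p ≤ t + 1 := by
  rcases p.2.2.lt_or_eq with hp | hp
  · obtain ⟨t, ht, ht'⟩ := exists_digit_of_lt_one (B := B) hp
    exact ⟨t, ht, ht'.le⟩
  · obtain ⟨n, rfl⟩ := Nat.exists_eq_succ_of_ne_zero (NeZero.ne B)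
    exact ⟨Fin.last n, by simp [hp], by simp [hp]⟩

def dilOp (A : Fin B → Matrix (Fin d) (Fin d) ℂ) : C(I, Fin d → ℂ) →ₗ[ℂ] C(I, Fin d → ℂ) where
  toFun Φ := ⟨fun p => ∑ s, A s *ᵥ Φ (digitShift B s p), by fun_prop⟩
  map_add' Φ Ψ := by ext1 p; simp [mulVec_add, Finset.sum_add_distrib]
  map_smul' c Φ := by ext1 p; simp [mulVec_smul, Finset.smul_sum]

variable (A : Fin B → Matrix (Fin d) (Fin d) ℂ)

theorem dilOp_apply (Φ : C(I, Fin d → ℂ)) (p : I) :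
    dilOp A Φ p = ∑ s, A s *ᵥ Φ (digitShift B s p) :=
  rfl

theorem dilOp_apply_zero {Φ : C(I, Fin d → ℂ)} (h0 : Φ 0 = 0) : dilOp A Φ 0 = 0 := by
  simp [dilOp_apply, h0]

theorem dilOp_apply_one (Φ : C(I, Fin d → ℂ)) : dilOp A Φ 1 = (∑ s, A s) *ᵥ Φ 1 := by
  simp [dilOp_apply, sum_mulVec]

theorem dilOp_apply_of_le {Φ : C(I, Fin d → ℂ)} {V : Fin d → ℂ} (h0 : Φ 0 = 0) (h1 : Φ 1 = V)
    {p : I} {t : Fin B} (ht : (t : ℝ) ≤ B * p) (ht' : (B : ℝ) * p ≤ t + 1) :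
    dilOp A Φ p = (∑ s ∈ Finset.univ.filter fun s : Fin B => s < t, A s *ᵥ V) +
      A t *ᵥ Φ (digitShift B t p) := by
  rw [dilOp_apply, ← Finset.sum_filter_add_sum_filter_not Finset.univ (· < t)]
  congr 1
  · refine Finset.sum_congr rfl fun s hs => ?_
    have hst : (s : ℝ) + 1 ≤ t := by exact_mod_cast (Finset.mem_filter.1 hs).2
    rw [digitShift_eq_one (by linarith), h1]
  · refine Finset.sum_eq_single_of_mem t (by simp) fun s hs hst => ?_
    have hts : t < s := lt_of_le_of_ne (not_lt.1 (Finset.mem_filter.1 hs).2) (Ne.symm hst)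
    have hts' : (t : ℝ) + 1 ≤ s := by exact_mod_cast hts
    rw [digitShift_eq_zero (by linarith), h0, mulVec_zero]

theorem exists_iterate_dilOp_apply_eq [NeZero B] (n : ℕ) {Δ : C(I, Fin d → ℂ)} (h0 : Δ 0 = 0)
    (h1 : Δ 1 = 0) (p : I) :
    ∃ (w : Fin n → Fin B) (q : I), (dilOp A)^[n] Δ p = wordProd A w *ᵥ Δ q := by
  induction n generalizing Δ p with
  | zero => exact ⟨Fin.elim0, p, by simp [wordProd]⟩
  | succ n ih =>
    obtain ⟨w, q, hw⟩ :=
      ih (dilOp_apply_zero A h0) (by rw [dilOp_apply_one, h1, mulVec_zero]) p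
    obtain ⟨t, ht, ht'⟩ := exists_digit (B := B) q
    refine ⟨Fin.snoc w t, digitShift B t q, ?_⟩
    rw [iterate_succ_apply, hw, dilOp_apply_of_le A h0 h1 ht ht', wordProd_snoc, ← mulVec_mulVec]
    simp

theorem norm_iterate_dilOp_le [NeZero B] {T : ℕ} {K : ℝ}
    (hK : ∀ w : Fin T → Fin B, ‖wordProd A w‖ ≤ K) {Δ : C(I, Fin d → ℂ)} (h0 : Δ 0 = 0)
    (h1 : Δ 1 = 0) : ‖(dilOp A)^[T] Δ‖ ≤ K * ‖Δ‖ := by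
  refine (ContinuousMap.norm_le_of_nonempty _).2 fun p => ?_
  obtain ⟨w, q, hw⟩ := exists_iterate_dilOp_apply_eq A T h0 h1 p
  rw [hw]
  calc ‖wordProd A w *ᵥ Δ q‖ ≤ ‖wordProd A w‖ * ‖Δ q‖ := linfty_opNorm_mulVec _ _
    _ ≤ K * ‖Δ‖ :=
      mul_le_mul (hK w) (Δ.norm_coe_le_norm q) (norm_nonneg _) ((norm_nonneg _).trans (hK w))

def dilStep (c : ℂ) (g Φ : C(I, Fin d → ℂ)) : C(I, Fin d → ℂ) :=
  c⁻¹ • (dilOp A Φ - g)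

theorem dilStep_sub_dilStep (c : ℂ) (g Φ Ψ : C(I, Fin d → ℂ)) :
    dilStep A c g Φ - dilStep A c g Ψ = c⁻¹ • dilOp A (Φ - Ψ) := by
  rw [dilStep, dilStep, map_sub]
  module

theorem iterate_dilStep_sub (c : ℂ) (g Φ Ψ : C(I, Fin d → ℂ)) (n : ℕ) :
    (dilStep A c g)^[n] Φ - (dilStep A c g)^[n] Ψ = c⁻¹ ^ n • (dilOp A)^[n] (Φ - Ψ) := by
  induction n with
  | zero => simp
  | succ n ih =>
    rw [iterate_succ_apply', iterate_succ_apply', dilStep_sub_dilStep, ih, map_smul, smul_smul,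
      ← pow_succ', iterate_succ_apply']

theorem dist_iterate_dilStep_le [NeZero B] {c : ℂ} {T : ℕ} {K : ℝ}
    (hK : ∀ w : Fin T → Fin B, ‖wordProd A w‖ ≤ K) (g : C(I, Fin d → ℂ)) {Φ Ψ : C(I, Fin d → ℂ)}
    (h0 : Φ 0 = Ψ 0) (h1 : Φ 1 = Ψ 1) :
    dist ((dilStep A c g)^[T] Φ) ((dilStep A c g)^[T] Ψ) ≤ K / ‖c‖ ^ T * dist Φ Ψ := by
  rw [dist_eq_norm, dist_eq_norm, iterate_dilStep_sub, norm_smul, norm_pow, norm_inv, inv_pow,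
    div_mul_eq_mul_div, inv_mul_eq_div]
  gcongr
  exact norm_iterate_dilOp_le A hK (by simp [h0]) (by simp [h1])

def IsDilSol (c : ℂ) (g : C(I, Fin d → ℂ)) (V : Fin d → ℂ) (Φ : C(I, Fin d → ℂ)) : Prop :=
  Φ 0 = 0 ∧ Φ 1 = V ∧ c • Φ = dilOp A Φ - g

def HasUniqueDilSol (c : ℂ) : Prop :=
  ∀ (g : C(I, Fin d → ℂ)) (W V : Fin d → ℂ), g 0 = 0 → g 1 = W →
    (∑ s, A s) *ᵥ V = c • V + W → ∃! Φ, IsDilSol A c g V Φ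

theorem mapsTo_dilStep {c : ℂ} (hc : c ≠ 0) {g : C(I, Fin d → ℂ)} {W V : Fin d → ℂ}
    (hg0 : g 0 = 0) (hg1 : g 1 = W) (hV : (∑ s, A s) *ᵥ V = c • V + W) :
    MapsTo (dilStep A c g) {Φ | Φ 0 = 0 ∧ Φ 1 = V} {Φ | Φ 0 = 0 ∧ Φ 1 = V} :=
  fun _ ⟨h0, h1⟩ => ⟨by simp [dilStep, dilOp_apply_zero A h0, hg0],
    by simp [dilStep, dilOp_apply_one, h1, hV, hg1, inv_smul_smul₀ hc]⟩

theorem hasUniqueDilSol [NeZero B] {c : ℂ} {T : ℕ} {K : ℝ} (hT : T ≠ 0)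
    (hK : ∀ w : Fin T → Fin B, ‖wordProd A w‖ ≤ K) (hKc : K < ‖c‖ ^ T) : HasUniqueDilSol A c := by
  intro g W V hg0 hg1 hV
  have hK0 : 0 ≤ K := (norm_nonneg _).trans (hK fun _ => 0)
  have hc : c ≠ 0 := by
    rintro rfl
    rw [norm_zero, zero_pow hT] at hKc
    linarith
  let X := {Φ : C(I, Fin d → ℂ) | Φ 0 = 0 ∧ Φ 1 = V}
  have hmaps : MapsTo (dilStep A c g) X X := mapsTo_dilStep A hc hg0 hg1 hV
  have hX : IsClosed X :=
    (isClosed_eq (continuous_eval_const 0) continuous_const).inter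
      (isClosed_eq (continuous_eval_const 1) continuous_const)
  have hXne : X.Nonempty := ⟨⟨fun p => (p : ℂ) • V, by fun_prop⟩, by simp, by simp⟩
  have hcontr : ContractingWith (⟨K / ‖c‖ ^ T, by positivity⟩ : NNReal)
      (hmaps.restrict _ X X)^[T] := by
    refine ⟨(div_lt_one (hK0.trans_lt hKc)).2 hKc, ?_⟩
    refine LipschitzWith.of_dist_le_mul fun Φ Ψ => ?_
    rw [Subtype.dist_eq, Subtype.dist_eq, MapsTo.coe_iterate_restrict,
      MapsTo.coe_iterate_restrict]
    exact dist_iterate_dilStep_le A hK g (Φ.2.1.trans Ψ.2.1.symm) (Φ.2.2.trans Ψ.2.2.symm)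
  have hsol : ∀ Φ, IsDilSol A c g V Φ ↔ Φ ∈ X ∧ IsFixedPt (dilStep A c g) Φ := fun Φ => by
    rw [IsFixedPt, dilStep, inv_smul_eq_iff₀ hc, eq_comm, IsDilSol]
    exact and_assoc.symm
  simpa only [hsol] using
    ContractingWith.existsUnique_isFixedPt_of_iterate hX.isComplete hXne hmaps hcontr

theorem IsDilSol.add_smul_apply_eq {c : ℂ} {g Φ : C(I, Fin d → ℂ)} {V : Fin d → ℂ}
    (hΦ : IsDilSol A c g V Φ) {p : I} {t : Fin B} (ht : (t : ℝ) ≤ B * p)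
    (ht' : (B : ℝ) * p ≤ t + 1) :
    g p + c • Φ p = (∑ s ∈ Finset.univ.filter fun s : Fin B => s < t, A s *ᵥ V) +
      A t *ᵥ Φ (digitShift B t p) := by
  rw [← dilOp_apply_of_le A hΦ.1 hΦ.2.1 ht ht', ← ContinuousMap.smul_apply, hΦ.2.2,
    ContinuousMap.sub_apply, add_sub_cancel]

theorem isDilSol_of_add_smul_apply_eq [NeZero B] {c : ℂ} {g Φ : C(I, Fin d → ℂ)}
    {W V : Fin d → ℂ} (hg1 : g 1 = W) (hV : (∑ s, A s) *ᵥ V = c • V + W) (h0 : Φ 0 = 0)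
    (h1 : Φ 1 = V)
    (h : ∀ p : I, (p : ℝ) < 1 → ∀ t : Fin B, (t : ℝ) ≤ B * p → (B : ℝ) * p < t + 1 →
      g p + c • Φ p = (∑ s ∈ Finset.univ.filter fun s : Fin B => s < t, A s *ᵥ V) +
        A t *ᵥ Φ (digitShift B t p)) :
    IsDilSol A c g V Φ := by
  refine ⟨h0, h1, ContinuousMap.ext fun p => ?_⟩
  rw [ContinuousMap.smul_apply, ContinuousMap.sub_apply]
  rcases p.2.2.lt_or_eq with hp | hp
  · obtain ⟨t, ht, ht'⟩ := exists_digit_of_lt_one (B := B) hp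
    rw [dilOp_apply_of_le A h0 h1 ht ht'.le, ← h p hp t ht ht', add_sub_cancel_left]
  · obtain rfl : p = 1 := Subtype.ext hp
    rw [dilOp_apply_one, h1, hV, hg1, add_sub_cancel_right]

def IsJordanChain {ν : ℕ} (M : Matrix (Fin d) (Fin d) ℂ) (c : ℂ) (V : Fin ν → Fin d → ℂ) :
    Prop :=
  (∀ h0 : 0 < ν, M *ᵥ V ⟨0, h0⟩ = c • V ⟨0, h0⟩) ∧
    ∀ j (hj : j + 1 < ν), M *ᵥ V ⟨j + 1, hj⟩ = c • V ⟨j + 1, hj⟩ + V ⟨j, Nat.lt_of_succ_lt hj⟩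

def IsDilChain {ν : ℕ} (c : ℂ) (V : Fin ν → Fin d → ℂ) (F : Fin ν → C(I, Fin d → ℂ)) : Prop :=
  (∀ h0 : 0 < ν, IsDilSol A c 0 (V ⟨0, h0⟩) (F ⟨0, h0⟩)) ∧
    ∀ j (hj : j + 1 < ν),
      IsDilSol A c (F ⟨j, Nat.lt_of_succ_lt hj⟩) (V ⟨j + 1, hj⟩) (F ⟨j + 1, hj⟩)

theorem IsDilChain.boundary {ν : ℕ} {c : ℂ} {V : Fin ν → Fin d → ℂ}
    {F : Fin ν → C(I, Fin d → ℂ)} (hF : IsDilChain A c V F) (j : Fin ν) :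
    F j 0 = 0 ∧ F j 1 = V j := by
  obtain ⟨_ | j, hj⟩ := j
  · exact ⟨(hF.1 hj).1, (hF.1 hj).2.1⟩
  · exact ⟨(hF.2 j hj).1, (hF.2 j hj).2.1⟩

def dilChain {ν : ℕ} (c : ℂ) (V : Fin ν → Fin d → ℂ) : (j : ℕ) → j < ν → C(I, Fin d → ℂ)
  | 0, h => Classical.epsilon (IsDilSol A c 0 (V ⟨0, h⟩))
  | j + 1, h =>
    Classical.epsilon (IsDilSol A c (dilChain c V j (Nat.lt_of_succ_lt h)) (V ⟨j + 1, h⟩))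

theorem isDilChain_dilChain {ν : ℕ} {c : ℂ} {V : Fin ν → Fin d → ℂ} (hsol : HasUniqueDilSol A c)
    (hV : IsJordanChain (∑ s, A s) c V) : IsDilChain A c V fun j => dilChain A c V j j.2 := by
  have h0 : ∀ h0 : 0 < ν, IsDilSol A c 0 (V ⟨0, h0⟩) (dilChain A c V 0 h0) := fun h0 =>
    Classical.epsilon_spec (hsol 0 0 _ rfl rfl (by rw [hV.1 h0, add_zero])).exists
  refine ⟨h0, fun j => ?_⟩
  induction j with
  | zero => exact fun hj =>
    Classical.epsilon_spec (hsol _ _ _ (h0 _).1 (h0 _).2.1 (hV.2 0 hj)).exists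
  | succ j ih => exact fun hj =>
    Classical.epsilon_spec (hsol _ _ _ (ih _).1 (ih _).2.1 (hV.2 _ hj)).exists

theorem IsDilChain.eq {ν : ℕ} {c : ℂ} {V : Fin ν → Fin d → ℂ} (hsol : HasUniqueDilSol A c)
    (hV : IsJordanChain (∑ s, A s) c V) {F G : Fin ν → C(I, Fin d → ℂ)}
    (hF : IsDilChain A c V F) (hG : IsDilChain A c V G) : F = G := by
  suffices ∀ j (hj : j < ν), F ⟨j, hj⟩ = G ⟨j, hj⟩ from funext fun j => this j j.2
  intro j
  induction j with
  | zero => exact fun hj =>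
    (hsol 0 0 _ rfl rfl (by rw [hV.1 hj, add_zero])).unique (hF.1 hj) (hG.1 hj)
  | succ j ih =>
    intro hj
    obtain ⟨h0, h1⟩ := hF.boundary A ⟨j, Nat.lt_of_succ_lt hj⟩
    refine (hsol _ _ _ h0 h1 (hV.2 j hj)).unique (hF.2 j hj) ?_
    rw [ih (Nat.lt_of_succ_lt hj)]
    exact hG.2 j hj

theorem isDilChain_of_systemDil [NeZero B] {ν : ℕ} {ρ : ℝ} {ω : ℂ} {V : Fin ν → Fin d → ℂ}
    (hV : IsJordanChain (∑ s, A s) (ρ * ω) V) {F : Fin ν → ℝ → Fin d → ℂ}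
    (hF : ∀ j, ContinuousOn (F j) (Icc 0 1)) (h : SystemDil A ρ ω V F) :
    IsDilChain A (ρ * ω) V fun j => ⟨(Icc 0 1).domRestrict (F j), (hF j).domRestrict⟩ := by
  obtain ⟨hF0, hF1, hFeq⟩ := h
  have hshift : ∀ j (p : I) (t : Fin B), (t : ℝ) ≤ B * p → (B : ℝ) * p < t + 1 →
      F j (B * p - t) = F j (digitShift B t p) := fun j p t ht ht' => by
    rw [coe_digitShift ht ht'.le]
  refine ⟨fun h0 => isDilSol_of_add_smul_apply_eq A (W := 0) rfl (by rw [hV.1 h0, add_zero])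
      (hF0 _) (hF1 _) fun p hp t ht ht' => ?_,
    fun j hj => isDilSol_of_add_smul_apply_eq A (hF1 _) (hV.2 j hj) (hF0 _) (hF1 _)
      fun p hp t ht ht' => ?_⟩
  · rw [ContinuousMap.zero_apply, zero_add]
    have := (hFeq p p.2.1 hp t ht ht').1 h0
    rwa [hshift _ p t ht ht'] at this
  · have := (hFeq p p.2.1 hp t ht ht').2 j hj
    rwa [hshift _ p t ht ht'] at this

theorem systemDil_of_isDilChain {ν : ℕ} {ρ : ℝ} {ω : ℂ} {V : Fin ν → Fin d → ℂ}
    {Φ : Fin ν → C(I, Fin d → ℂ)} (hΦ : IsDilChain A (ρ * ω) V Φ) :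
    SystemDil A ρ ω V fun j => IccExtend zero_le_one (Φ j) := by
  have hx : ∀ j x (hx : x ∈ Icc (0 : ℝ) 1), IccExtend zero_le_one (Φ j) x = Φ j ⟨x, hx⟩ :=
    fun j x hx => IccExtend_of_mem _ _ hx
  refine ⟨fun j => (IccExtend_left _ _).trans (hΦ.boundary A j).1,
    fun j => (IccExtend_right _ _).trans (hΦ.boundary A j).2,
    fun x hx0 hx1 t ht ht' => ⟨fun h0 => ?_, fun j hj => ?_⟩⟩
  · have := (hΦ.1 h0).add_smul_apply_eq A (p := ⟨x, hx0, hx1.le⟩) ht ht'.le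
    rw [ContinuousMap.zero_apply, zero_add] at this
    dsimp only
    rwa [hx _ x ⟨hx0, hx1.le⟩]
  · dsimp only
    rw [hx _ x ⟨hx0, hx1.le⟩, hx _ x ⟨hx0, hx1.le⟩]
    exact (hΦ.2 j hj).add_smul_apply_eq A (p := ⟨x, hx0, hx1.le⟩) ht ht'.le

end Dilation

open Dilation

theorem systemDil_existsUnique_general (B d ν : ℕ) (hB : 2 ≤ B) (hν : 0 < ν)
    (A : Fin B → Matrix (Fin d) (Fin d) ℂ)
    (ρ : ℝ) (hρ : 0 < ρ) (ω : ℂ) (hω : ‖ω‖ = 1)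
    -- hypothesis (gev)
    (V : Fin ν → Fin d → ℂ)
    (hV0 : (∑ r, A r).mulVec (V ⟨0, hν⟩) = ((ρ : ℂ) * ω) • V ⟨0, hν⟩)
    (hVs : ∀ j : ℕ, ∀ hj : j + 1 < ν,
      (∑ r, A r).mulVec (V ⟨j + 1, hj⟩) =
        ((ρ : ℂ) * ω) • V ⟨j + 1, hj⟩ + V ⟨j, Nat.lt_of_succ_lt hj⟩)
    -- hypothesis (jsr_λ)
    (lam : ℝ) (hlam : 0 < lam) (hlamρ : lam < ρ)
    (hjsr : ∃ T : ℕ, 1 ≤ T ∧ ∀ w : Fin T → Fin B, ‖wordProd A w‖ ≤ lam ^ T) :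
    ∃ F : Fin ν → ℝ → Fin d → ℂ,
      (∀ j, ContinuousOn (F j) (Set.Icc 0 1)) ∧ SystemDil A ρ ω V F ∧
        ∀ G : Fin ν → ℝ → Fin d → ℂ, (∀ j, ContinuousOn (G j) (Set.Icc 0 1)) →
          SystemDil A ρ ω V G → ∀ j, Set.EqOn (G j) (F j) (Set.Icc 0 1) := by
  obtain ⟨T, hT, hK⟩ := hjsr
  have hT0 : T ≠ 0 := by omega
  have : NeZero B := ⟨by omega⟩
  have hc : ‖(ρ : ℂ) * ω‖ = ρ := by
    rw [norm_mul, Complex.norm_real, hω, mul_one, Real.norm_of_nonneg hρ.le]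
  have hsol : HasUniqueDilSol A ((ρ : ℂ) * ω) :=
    hasUniqueDilSol A hT0 hK (by rw [hc]; exact pow_lt_pow_left₀ hlamρ hlam.le hT0)
  have hV : IsJordanChain (∑ r, A r) ((ρ : ℂ) * ω) V := ⟨fun _ => hV0, hVs⟩
  have hΦ := isDilChain_dilChain A hsol hV
  refine ⟨fun j => IccExtend zero_le_one (dilChain A _ V j j.2),
    fun j => (dilChain A _ V j j.2).continuous.Icc_extend'.continuousOn,
    systemDil_of_isDilChain A hΦ, fun G hG hGsys j x hx => ?_⟩
  dsimp only
  rw [IccExtend_of_mem _ _ hx]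
  have hGΦ := (isDilChain_of_systemDil A hV hG hGsys).eq A hsol hV hΦ
  exact DFunLike.congr_fun (congrFun hGΦ j) ⟨x, hx⟩

/-- under (gev) and (jsr_λ) with `λ < ρ`, the system of dilation equations
has exactly one continuous solution with the prescribed boundary values. -/
theorem systemDil_existsUnique (B d ν : ℕ) (hB : 2 ≤ B) (hd : 1 ≤ d) (hν : 0 < ν)
    (A : Fin B → Matrix (Fin d) (Fin d) ℂ)
    (ρ : ℝ) (hρ : 0 < ρ) (ω : ℂ) (hω : ‖ω‖ = 1)
    -- hypothesis (gev)
    (V : Fin ν → Fin d → ℂ) (hind : LinearIndependent ℂ V)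
    (hV0 : (∑ r, A r).mulVec (V ⟨0, hν⟩) = ((ρ : ℂ) * ω) • V ⟨0, hν⟩)
    (hVs : ∀ j : ℕ, ∀ hj : j + 1 < ν,
      (∑ r, A r).mulVec (V ⟨j + 1, hj⟩) =
        ((ρ : ℂ) * ω) • V ⟨j + 1, hj⟩ + V ⟨j, Nat.lt_of_succ_lt hj⟩)
    -- hypothesis (jsr_λ)
    (lam : ℝ) (hlam : 0 < lam) (hlamρ : lam < ρ)
    (hjsr : ∃ T : ℕ, 1 ≤ T ∧ ∀ w : Fin T → Fin B, ‖wordProd A w‖ ≤ lam ^ T) :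
    ∃ F : Fin ν → ℝ → Fin d → ℂ,
      (∀ j, ContinuousOn (F j) (Set.Icc 0 1)) ∧ SystemDil A ρ ω V F ∧
        ∀ G : Fin ν → ℝ → Fin d → ℂ, (∀ j, ContinuousOn (G j) (Set.Icc 0 1)) →
          SystemDil A ρ ω V G → ∀ j, Set.EqOn (G j) (F j) (Set.Icc 0 1) :=
  systemDil_existsUnique_general B d ν hB hν A ρ hρ ω hω V hV0 hVs lam hlam hlamρ hjsr
end
end
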